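/- arXiv:2101.03960 — 10 statements merged into one kernel-verified Lean document; each statement's English description precedes it below -/
import Mathlib

section
/- Flett's mean value theorem: Let a < b and let f : ℝ → ℝ be differentiable at every point of the closed interval [a, b], with f'(a) = f'(b). Then there exists ξ ∈ (a, b) such that f'(ξ) = (f(ξ) - f(a)) / (ξ - a). -/
/-!
Let `g` be the slope of `f` from `a`, extended to `a` by `f' a`. It is continuous on `[a, b]` and on
`(a, b]` has derivative `(f' x - g x) / (x - a)`, so the points sought are the critical points of
`g` in `(a, b)`. The hypothesis `f' a = f' b` says exactly that the one-sided derivative of `g` at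
`b` is the negative of the mean slope `m` of `g` on `[a, b]`. The mean value theorem gives `η` with
`g' η = m`, and Darboux's theorem on `[η, b]` gives a zero of `g'` between `m` and `-m`.
-/

open Set Filter Topology Function

section UpdateSlope

variable {𝕜 E : Type*} [NontriviallyNormedField 𝕜] [DecidableEq 𝕜]
  [NormedAddCommGroup E] [NormedSpace 𝕜 E] {f : 𝕜 → E} {d f' : E} {s : Set 𝕜} {a x : 𝕜}

theorem HasDerivWithinAt.continuousWithinAt_update_slope (h : HasDerivWithinAt f d s a) :
    ContinuousWithinAt (update (slope f a) a d) s a :=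
  continuousWithinAt_update_same.2 (hasDerivWithinAt_iff_tendsto_slope.1 h)

theorem update_slope_eventuallyEq (hx : x ≠ a) :
    update (slope f a) a d =ᶠ[𝓝[s] x] slope f a :=
  (eventually_ne_nhdsWithin hx).mono fun _ hy => update_of_ne hy _ _

theorem ContinuousOn.update_slope (hf : ContinuousOn f s) (ha : HasDerivWithinAt f d s a) :
    ContinuousOn (update (slope f a) a d) s := by
  intro x hx
  rcases eq_or_ne x a with rfl | hxa
  · exact ha.continuousWithinAt_update_slope
  · have : ContinuousWithinAt (slope f a) s x := by
      simp only [slope_fun_def, vsub_eq_sub]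
      exact ((continuousWithinAt_id.sub continuousWithinAt_const).inv₀ (sub_ne_zero.2 hxa)).smul
        ((hf x hx).sub continuousWithinAt_const)
    exact this.congr_of_eventuallyEq (update_slope_eventuallyEq hxa) (update_of_ne hxa _ _)

theorem HasDerivWithinAt.update_slope (hf : HasDerivWithinAt f f' s x) (hx : x ≠ a) :
    HasDerivWithinAt (update (slope f a) a d) ((x - a)⁻¹ • (f' - slope f a x)) s x := by
  have hxa : x - a ≠ 0 := sub_ne_zero.2 hx
  have h := ((hasDerivWithinAt_id x s).sub_const a).inv hxa |>.smul (hf.sub_const (f a))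
  refine HasDerivWithinAt.congr_of_eventuallyEq ?_ (update_slope_eventuallyEq hx)
    (update_of_ne hx _ _)
  convert h using 1
  · ext y; simp [slope_def_module]
  · rw [slope_def_module, smul_sub, smul_smul, sub_eq_add_neg, ← neg_smul]
    simp only [Pi.inv_apply, id]
    congr 2
    field_simp

end UpdateSlope

theorem exists_hasDerivWithinAt_eq_zero_of_eq_neg_slope {g g' : ℝ → ℝ} {a b : ℝ} (hab : a < b)
    (hgc : ContinuousOn g (Icc a b))
    (hg : ∀ x ∈ Ioc a b, HasDerivWithinAt g (g' x) (Icc a b) x)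
    (hgb : g' b = -slope g a b) :
    ∃ ξ ∈ Ioo a b, g' ξ = 0 := by
  obtain ⟨η, hη, hgη⟩ := exists_hasDerivAt_eq_slope g g' hab hgc fun x hx =>
    (hg x (Ioo_subset_Ioc_self hx)).hasDerivAt (Icc_mem_nhds hx.1 hx.2)
  rw [← slope_def_field] at hgη
  rw [← hgη] at hgb
  have hg_ηb : ∀ x ∈ Icc η b, HasDerivWithinAt g (g' x) (Icc η b) x := fun x hx =>
    (hg x ⟨hη.1.trans_le hx.1, hx.2⟩).mono (Icc_subset_Icc_left hη.1.le)
  have hsub : Ioo η b ⊆ Ioo a b := Ioo_subset_Ioo_left hη.1.le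
  rcases lt_trichotomy (g' η) 0 with hneg | hzero | hpos
  · obtain ⟨ξ, hξ, h⟩ := exists_hasDerivWithinAt_eq_of_gt_of_lt hη.2.le hg_ηb hneg (by linarith)
    exact ⟨ξ, hsub hξ, h⟩
  · exact ⟨η, hη, hzero⟩
  · obtain ⟨ξ, hξ, h⟩ := exists_hasDerivWithinAt_eq_of_lt_of_gt hη.2.le hg_ηb hpos (by linarith)
    exact ⟨ξ, hsub hξ, h⟩

/-- Flett's mean value theorem. -/
theorem flett_mean_value (f f' : ℝ → ℝ) (a b : ℝ) (hab : a < b)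
    (hf : ∀ x ∈ Set.Icc a b, HasDerivWithinAt f (f' x) (Set.Icc a b) x)
    (hend : f' a = f' b) :
    ∃ ξ ∈ Set.Ioo a b, f' ξ = (f ξ - f a) / (ξ - a) := by
  set g := update (slope f a) a (f' a)
  have hg_cont : ContinuousOn g (Icc a b) :=
    ContinuousOn.update_slope (fun x hx => (hf x hx).continuousWithinAt) (hf a ⟨le_rfl, hab.le⟩)
  have hg_deriv : ∀ x ∈ Ioc a b,
      HasDerivWithinAt g ((x - a)⁻¹ * (f' x - slope f a x)) (Icc a b) x := fun x hx =>
    (hf x (Ioc_subset_Icc_self hx)).update_slope hx.1.ne'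
  have hg_b : (b - a)⁻¹ * (f' b - slope f a b) = -slope g a b := by
    simp only [slope_def_field, g, update_self, update_of_ne hab.ne', hend]
    field_simp
    ring
  obtain ⟨ξ, hξ, hξ0⟩ := exists_hasDerivWithinAt_eq_zero_of_eq_neg_slope hab hg_cont hg_deriv hg_b
  refine ⟨ξ, hξ, ?_⟩
  rw [← slope_def_field]
  simpa [sub_eq_zero, hξ.1.ne'] using hξ0
end

section
/- Meyers' variant of Flett's theorem (Theorem 2.3): Let a < b and let f : ℝ → ℝ be differentiable at every point of the closed interval [a, b], with f'(a) = f'(b). Then there exists ξ ∈ (a, b) such that f'(ξ) = (f(b) - f(ξ)) / (b - ξ). -/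
/-!
Let `g` be the slope of `f` from `b`, extended by `f' b` at `b`. It is continuous on `[a, b]`, and
for `x ≠ b` its derivative is `(f' x - g x) / (x - b)`, which vanishes exactly at the points `ξ`
sought. Because `f' a = f' b = g b`, the right derivative of `g` at `a` is `(g a - g b) / (b - a)`:
`g` starts moving away from `g b`, so it cannot attain its extremum over `[a, b]` only at the
endpoints (when `g a = g b` this is Rolle's theorem). An interior extremum is the required `ξ`.
-/

open Set Filter Topology Function

section OneSidedExtremum

variable {g : ℝ → ℝ} {a b d : ℝ}

theorem IsLocalMaxOn.hasDerivWithinAt_Icc_left_nonpos (h : IsLocalMaxOn g (Icc a b) a)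
    (hd : HasDerivWithinAt g d (Icc a b) a) (hab : a < b) : d ≤ 0 := by
  have hcone : b - a ∈ posTangentConeAt (Icc a b) a :=
    mem_posTangentConeAt_of_segment_subset <| by
      rw [add_sub_cancel, segment_eq_Icc hab.le]
  have hle : (b - a) * d ≤ 0 := by
    simpa using h.hasFDerivWithinAt_nonpos hd.hasFDerivWithinAt hcone
  exact nonpos_of_mul_nonpos_right hle (sub_pos.2 hab)

theorem exists_mem_Ioo_isLocalMax_of_hasDerivWithinAt_pos (hab : a < b)
    (hg : ContinuousOn g (Icc a b)) (hd : HasDerivWithinAt g d (Icc a b) a) (hd0 : 0 < d)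
    (hgb : g b ≤ g a) : ∃ c ∈ Ioo a b, IsLocalMax g c := by
  have ha_not_max : ¬IsMaxOn g (Icc a b) a := fun hmax =>
    hd0.not_ge <| hmax.localize.hasDerivWithinAt_Icc_left_nonpos hd hab
  obtain ⟨c, hc, hmax⟩ := isCompact_Icc.exists_isMaxOn (nonempty_Icc.2 hab.le) hg
  have hca : c ≠ a := by rintro rfl; exact ha_not_max hmax
  have hcb : c ≠ b := by
    rintro rfl
    exact ha_not_max fun x hx => (hmax hx).trans hgb
  have hc' : c ∈ Ioo a b := ⟨hc.1.lt_of_ne' hca, hc.2.lt_of_ne hcb⟩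
  exact ⟨c, hc', hmax.isLocalMax (Icc_mem_nhds hc'.1 hc'.2)⟩

theorem exists_mem_Ioo_isLocalExtr_of_sign_eq (hab : a < b) (hg : ContinuousOn g (Icc a b))
    (hd : HasDerivWithinAt g d (Icc a b) a) (hsign : SignType.sign d = SignType.sign (g a - g b)) :
    ∃ c ∈ Ioo a b, IsLocalExtr g c := by
  rcases lt_trichotomy (g a) (g b) with hlt | heq | hgt
  · have hd0 : d < 0 := by
      rwa [sign_eq_neg_one_iff.2 (sub_neg.2 hlt), sign_eq_neg_one_iff] at hsign
    obtain ⟨c, hc, hmax⟩ := exists_mem_Ioo_isLocalMax_of_hasDerivWithinAt_pos hab hg.neg hd.neg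
      (neg_pos.2 hd0) (neg_le_neg hlt.le)
    exact ⟨c, hc, .inl (by simpa using hmax.neg : IsLocalMin g c)⟩
  · exact exists_isLocalExtr_Ioo hab hg heq
  · have hd0 : 0 < d := by
      rwa [sign_eq_one_iff.2 (sub_pos.2 hgt), sign_eq_one_iff] at hsign
    obtain ⟨c, hc, hmax⟩ := exists_mem_Ioo_isLocalMax_of_hasDerivWithinAt_pos hab hg hd hd0 hgt.le
    exact ⟨c, hc, .inr hmax⟩

end OneSidedExtremum

section SlopeFromPoint

variable {𝕜 : Type*} [NontriviallyNormedField 𝕜] {f : 𝕜 → 𝕜} {f' : 𝕜} {s : Set 𝕜} {x b : 𝕜}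

theorem HasDerivWithinAt.slope_left (hf : HasDerivWithinAt f f' s x) (hx : x ≠ b) :
    HasDerivWithinAt (slope f b) ((f' - slope f b x) / (x - b)) s x := by
  have hxb : x - b ≠ 0 := sub_ne_zero.2 hx
  have hslope : slope f b = fun y => (f y - f b) / (y - b) := funext fun y => slope_def_field f b y
  have := (hf.sub_const (f b)).div ((hasDerivWithinAt_id x s).sub_const b) hxb
  rw [hslope]
  refine this.congr_deriv ?_
  simp only [id]
  field_simp

theorem HasDerivWithinAt.update_slope_left [DecidableEq 𝕜] (hf : HasDerivWithinAt f f' s x)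
    (hx : x ≠ b) (c : 𝕜) :
    HasDerivWithinAt (update (slope f b) b c) ((f' - slope f b x) / (x - b)) s x :=
  (hf.slope_left hx).congr_of_eventuallyEq
    (eventually_nhdsWithin_of_eventually_nhds <| (eventually_ne_nhds hx).mono
      fun _ hy => update_of_ne hy _ _)
    (update_of_ne hx _ _)

theorem continuousOn_update_slope [DecidableEq 𝕜] {f' : 𝕜 → 𝕜}
    (hf : ∀ y ∈ s, HasDerivWithinAt f (f' y) s y) :
    ContinuousOn (update (slope f b) b (f' b)) s := by
  intro y hy
  rcases eq_or_ne y b with rfl | hyb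
  · rw [continuousWithinAt_update_same]
    exact hasDerivWithinAt_iff_tendsto_slope.1 (hf y hy)
  · exact ((hf y hy).update_slope_left hyb _).continuousWithinAt

end SlopeFromPoint

/-- Meyers' variant of Flett's theorem (Theorem 2.3). -/
theorem meyers_variant_2_3 (f f' : ℝ → ℝ) (a b : ℝ) (hab : a < b)
    (hf : ∀ x ∈ Set.Icc a b, HasDerivWithinAt f (f' x) (Set.Icc a b) x)
    (hend : f' a = f' b) :
    ∃ ξ ∈ Set.Ioo a b, f' ξ = (f b - f ξ) / (b - ξ) := by
  -- `dslope f b` would use `deriv f b`, which is junk at the endpoint `b`.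
  set g := update (slope f b) b (f' b)
  have hga : g a = slope f b a := update_of_ne hab.ne _ _
  have hda : HasDerivWithinAt g ((g a - g b) / (b - a)) (Icc a b) a := by
    refine ((hf a (left_mem_Icc.2 hab.le)).update_slope_left hab.ne (f' b)).congr_deriv ?_
    rw [hga, show g b = f' b from update_self .., hend, ← neg_sub b a, div_neg, ← neg_div, neg_sub]
  have hsign : SignType.sign ((g a - g b) / (b - a)) = SignType.sign (g a - g b) := by
    rw [div_eq_mul_inv, sign_mul, sign_pos (inv_pos.2 (sub_pos.2 hab)), mul_one]
  obtain ⟨ξ, hξ, hextr⟩ := exists_mem_Ioo_isLocalExtr_of_sign_eq hab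
    (continuousOn_update_slope hf) hda hsign
  have hdξ := ((hf ξ (Ioo_subset_Icc_self hξ)).update_slope_left hξ.2.ne (f' b)).hasDerivAt
    (Icc_mem_nhds hξ.1 hξ.2)
  have hzero := hextr.hasDerivAt_eq_zero hdξ
  refine ⟨ξ, hξ, ?_⟩
  rw [div_eq_zero_iff, sub_eq_zero, sub_eq_zero] at hzero
  rw [← slope_def_field, slope_comm]
  exact hzero.resolve_right hξ.2.ne
end

section
/- Meyers' Theorem 3: Let a < b and let f : ℝ → ℝ be differentiable at every point of the closed interval [a, b] with derivative f' continuous on [a, b]. If (f(b) - f(a)) * (f(b) - f(a) - (b - a) * f'(b)) < 0, then there exists ξ ∈ (a, b) such that f'(ξ) = (f(b) - f(a)) / (ξ - a). -/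
open Set

theorem exists_mem_Ioo_eq_zero_of_mul_neg {α δ : Type*} [ConditionallyCompleteLinearOrder α]
    [TopologicalSpace α] [OrderTopology α] [DenselyOrdered α] [Ring δ] [LinearOrder δ]
    [IsStrictOrderedRing δ] [TopologicalSpace δ] [OrderClosedTopology δ] {a b : α} (hab : a ≤ b)
    {g : α → δ} (hg : ContinuousOn g (Icc a b)) (hsign : g a * g b < 0) :
    ∃ c ∈ Ioo a b, g c = 0 := by
  rcases mul_neg_iff.1 hsign with ⟨ha, hb⟩ | ⟨ha, hb⟩
  · exact intermediate_value_Ioo' hab hg ⟨hb, ha⟩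
  · exact intermediate_value_Ioo hab hg ⟨ha, hb⟩

theorem meyers_theorem_3_general (f f' : ℝ → ℝ) (a b : ℝ) (hab : a < b)
    (hf' : ContinuousOn f' (Set.Icc a b))
    (hcond : (f b - f a) * (f b - f a - (b - a) * f' b) < 0) :
    ∃ ξ ∈ Set.Ioo a b, f' ξ = (f b - f a) / (ξ - a) := by
  set g : ℝ → ℝ := fun x => f' x * (x - a) - (f b - f a)
  have hg : ContinuousOn g (Icc a b) := by fun_prop
  have hsign : g a * g b < 0 := by
    convert hcond using 1
    ring
  obtain ⟨ξ, hξ, hgξ⟩ := exists_mem_Ioo_eq_zero_of_mul_neg hab.le hg hsign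
  refine ⟨ξ, hξ, ?_⟩
  rw [eq_div_iff (sub_ne_zero.2 hξ.1.ne')]
  exact sub_eq_zero.1 hgξ

/-- Meyers' Theorem 3. -/
theorem meyers_theorem_3 (f f' : ℝ → ℝ) (a b : ℝ) (hab : a < b)
    (hf : ∀ x ∈ Set.Icc a b, HasDerivWithinAt f (f' x) (Set.Icc a b) x)
    (hf' : ContinuousOn f' (Set.Icc a b))
    (hcond : (f b - f a) * (f b - f a - (b - a) * f' b) < 0) :
    ∃ ξ ∈ Set.Ioo a b, f' ξ = (f b - f a) / (ξ - a) :=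
  meyers_theorem_3_general f f' a b hab hf' hcond
end

section
/- Tong's condition for existence of a Flett point: Let a < b and let f : ℝ → ℝ be continuous on [a, b] and differentiable at every point of (a, b). If the arithmetic mean (f(a) + f(b))/2 equals the integral mean (1/(b - a)) ∫_a^b f(t) dt, then there exists ξ ∈ (a, b) such that f'(ξ) = (f(ξ) - f(a)) / (ξ - a) (a Flett point of f). -/
/-!
The defect of the trapezoidal rule on `[a, x]`, `F x = ∫_a^x f - (x - a) (f x + f a) / 2`,
vanishes at `x = a`, and Tong's condition says exactly that it vanishes at `x = b`. Its
derivative is `((f x - f a) - (x - a) f' x) / 2`, so a Rolle point of `F` is a Flett point of `f`.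
-/

open Set intervalIntegral

noncomputable def trapezoidDefect (f : ℝ → ℝ) (a x : ℝ) : ℝ :=
  (∫ t in a..x, f t) - (x - a) * (f x + f a) / 2

section

variable {f : ℝ → ℝ} {a b : ℝ}

theorem trapezoidDefect_self : trapezoidDefect f a a = 0 := by
  simp [trapezoidDefect]

theorem trapezoidDefect_eq_zero_iff (hab : a ≠ b) :
    trapezoidDefect f a b = 0 ↔ (f a + f b) / 2 = (1 / (b - a)) * ∫ t in a..b, f t := by
  have hba : b - a ≠ 0 := sub_ne_zero.2 hab.symm
  rw [trapezoidDefect, sub_eq_zero, one_div_mul_eq_div, eq_div_iff hba]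
  constructor <;> intro h <;> linarith

theorem ContinuousOn.trapezoidDefect (hab : a ≤ b) (hf : ContinuousOn f (Icc a b)) :
    ContinuousOn (trapezoidDefect f a) (Icc a b) := by
  have hprim : ContinuousOn (fun x ↦ ∫ t in a..x, f t) (Icc a b) := by
    rw [← uIcc_of_le hab] at hf ⊢
    exact continuousOn_primitive_interval hf.integrableOn_uIcc
  exact hprim.sub (((continuousOn_id.sub continuousOn_const).mul
    (hf.add continuousOn_const)).div_const 2)

theorem hasDerivAt_trapezoidDefect {x f'x : ℝ} (hf : ContinuousOn f (Icc a b))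
    (hx : x ∈ Ioo a b) (hf' : HasDerivAt f f'x x) :
    HasDerivAt (trapezoidDefect f a) ((f x - f a - (x - a) * f'x) / 2) x := by
  have hprim : HasDerivAt (fun x ↦ ∫ t in a..x, f t) (f x) x :=
    integral_hasDerivAt_right
      ((hf.mono (Icc_subset_Icc_right hx.2.le)).intervalIntegrable_of_Icc hx.1.le)
      (hf.stronglyMeasurableAtFilter_nhdsWithin measurableSet_Icc x |>.filter_mono
        (nhdsWithin_eq_nhds.2 (Icc_mem_nhds hx.1 hx.2)).ge)
      hf'.continuousAt
  have hchord : HasDerivAt (fun x ↦ (x - a) * (f x + f a)) (1 * (f x + f a) + (x - a) * f'x) x :=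
    ((hasDerivAt_id x).sub_const a).mul (hf'.add_const (f a))
  exact (hprim.sub (hchord.div_const 2)).congr_deriv (by ring)

end

/-- Tong's condition for the existence of a Flett point. -/
theorem tong_condition (f f' : ℝ → ℝ) (a b : ℝ) (hab : a < b)
    (hfc : ContinuousOn f (Set.Icc a b))
    (hf : ∀ x ∈ Set.Ioo a b, HasDerivAt f (f' x) x)
    (hcond : (f a + f b) / 2 = (1 / (b - a)) * ∫ t in a..b, f t) :
    ∃ ξ ∈ Set.Ioo a b, f' ξ = (f ξ - f a) / (ξ - a) := by
  have hends : trapezoidDefect f a a = trapezoidDefect f a b := by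
    rw [trapezoidDefect_self, (trapezoidDefect_eq_zero_iff hab.ne).2 hcond]
  obtain ⟨ξ, hξ, hrolle⟩ := exists_hasDerivAt_eq_zero hab (hfc.trapezoidDefect hab.le) hends
    fun x hx ↦ hasDerivAt_trapezoidDefect hfc hx (hf x hx)
  refine ⟨ξ, hξ, ?_⟩
  rw [eq_div_iff (sub_ne_zero.2 hξ.1.ne')]
  linarith
end

section
/- Malesevic's condition T₁: Let a < b and let f : ℝ → ℝ be differentiable at every point of [a, b]. Define φ₁ : [a, b] → ℝ by φ₁(x) = (f(x) - f(a))/(x - a) - f'(a) for x ∈ (a, b] and φ₁(a) = 0, and assume φ₁ is differentiable at b (one-sided derivative within [a, b]). If φ₁'(b) * φ₁(b) < 0, then there exists ξ ∈ (a, b) such that f'(ξ) = (f(ξ) - f(a)) / (ξ - a) (a Flett point of f). -/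
/-!
On `(a, b]` the function `φ` is the slope `(f x - f a)/(x - a)` shifted by a constant, and at
`a` it is continuous because `f` is differentiable there. Since `φ'(b)` and `φ(b) - φ(a)` have
opposite signs, `φ` takes values beyond `φ(b)` just to the left of `b`, so the extremum of `φ` on
`[a, b]` lying on that side is attained in `(a, b)`. There the derivative of the slope,
`(f'(ξ) - (f(ξ) - f(a))/(ξ - a))/(ξ - a)`, vanishes, which is the Flett equation.
-/

open Set Filter

theorem IsLocalMaxOn.hasDerivWithinAt_Icc_right_nonneg {g : ℝ → ℝ} {g' a b : ℝ}
    (hab : a < b) (hmax : IsLocalMaxOn g (Icc a b) b) (hg : HasDerivWithinAt g g' (Icc a b) b) :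
    0 ≤ g' := by
  have hcone : a - b ∈ posTangentConeAt (Icc a b) b :=
    sub_mem_posTangentConeAt_of_segment_subset <|
      (convex_Icc a b).segment_subset (right_mem_Icc.2 hab.le) (left_mem_Icc.2 hab.le)
  have := hmax.hasFDerivWithinAt_nonpos hg.hasFDerivWithinAt hcone
  rw [ContinuousLinearMap.toSpanSingleton_apply, smul_eq_mul] at this
  exact nonneg_of_mul_nonpos_right this (sub_neg.2 hab)

theorem exists_isLocalMax_mem_Ioo_of_hasDerivWithinAt_neg {g : ℝ → ℝ} {g' a b : ℝ}
    (hab : a < b) (hg : ContinuousOn g (Icc a b)) (hgb : HasDerivWithinAt g g' (Icc a b) b)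
    (hg' : g' < 0) (hgab : g a < g b) : ∃ ξ ∈ Ioo a b, IsLocalMax g ξ := by
  obtain ⟨ξ, hξ, hmax⟩ := isCompact_Icc.exists_isMaxOn (nonempty_Icc.2 hab.le) hg
  have hξa : ξ ≠ a := by
    rintro rfl
    exact (hmax (right_mem_Icc.2 hab.le)).not_gt hgab
  have hξb : ξ ≠ b := by
    rintro rfl
    exact hg'.not_ge <|
      (hmax.localize.on_subset subset_rfl).hasDerivWithinAt_Icc_right_nonneg hab hgb
  have hξ' : ξ ∈ Ioo a b := ⟨hξ.1.lt_of_ne' hξa, hξ.2.lt_of_ne hξb⟩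
  exact ⟨ξ, hξ', hmax.isLocalMax (Icc_mem_nhds hξ'.1 hξ'.2)⟩

theorem exists_isLocalExtr_mem_Ioo_of_hasDerivWithinAt_mul_neg {g : ℝ → ℝ} {g' a b : ℝ}
    (hab : a < b) (hg : ContinuousOn g (Icc a b)) (hgb : HasDerivWithinAt g g' (Icc a b) b)
    (hg' : g' * (g b - g a) < 0) : ∃ ξ ∈ Ioo a b, IsLocalExtr g ξ := by
  rcases mul_neg_iff.1 hg' with ⟨hpos, hdiff⟩ | ⟨hneg, hdiff⟩
  · obtain ⟨ξ, hξ, hmax⟩ := exists_isLocalMax_mem_Ioo_of_hasDerivWithinAt_neg (g := -g) hab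
      hg.neg hgb.neg (neg_lt_zero.2 hpos) (by simp only [Pi.neg_apply]; linarith)
    exact ⟨ξ, hξ, (by simpa using hmax.neg : IsLocalMin g ξ).isExtr⟩
  · obtain ⟨ξ, hξ, hmax⟩ := exists_isLocalMax_mem_Ioo_of_hasDerivWithinAt_neg hab hg hgb hneg
      (by linarith)
    exact ⟨ξ, hξ, hmax.isExtr⟩

theorem HasDerivAt.slope {f : ℝ → ℝ} {f' a x : ℝ} (hf : HasDerivAt f f' x) (hx : x ≠ a) :
    HasDerivAt (slope f a) ((f' - slope f a x) / (x - a)) x := by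
  have hxa : x - a ≠ 0 := sub_ne_zero.2 hx
  have hslope : _root_.slope f a = fun y => (f y - f a) / (y - a) :=
    funext fun y => slope_def_field f a y
  rw [hslope]
  refine ((hf.sub_const (f a)).fun_div ((hasDerivAt_id x).sub_const a) hxa).congr_deriv ?_
  simp only [id, mul_one]
  field_simp

theorem continuousOn_Icc_of_eqOn_slope_sub {f φ : ℝ → ℝ} {f'a a b : ℝ}
    (hf : ContinuousOn f (Icc a b)) (hfa : HasDerivWithinAt f f'a (Icc a b) a)
    (hφa : φ a = 0) (hφ : EqOn φ (fun x => slope f a x - f'a) (Ioc a b)) :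
    ContinuousOn φ (Icc a b) := by
  intro x hx
  rw [← continuousWithinAt_sdiff_singleton (y := a), Icc_sdiff_left]
  rcases hx.1.eq_or_lt with rfl | hax
  · have hfa := hasDerivWithinAt_iff_tendsto_slope.1 hfa
    rw [Icc_sdiff_left] at hfa
    rw [ContinuousWithinAt, hφa, ← sub_self f'a]
    exact (hfa.sub_const f'a).congr' (eventually_nhdsWithin_of_forall fun y hy => (hφ hy).symm)
  · have hslope : ContinuousWithinAt (fun y => slope f a y - f'a) (Ioc a b) x := by
      simp only [slope_def_field]
      exact (((hf x hx).mono Ioc_subset_Icc_self).sub continuousWithinAt_const).div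
        (continuousWithinAt_id.sub continuousWithinAt_const) (sub_ne_zero.2 hax.ne') |>.sub
        continuousWithinAt_const
    exact hslope.congr hφ (hφ ⟨hax, hx.2⟩)

/-- Malesevic's condition T₁ for the existence of a Flett point. -/
theorem malesevic_condition_T1 (f f' φ : ℝ → ℝ) (φ'b : ℝ) (a b : ℝ) (hab : a < b)
    (hf : ∀ x ∈ Set.Icc a b, HasDerivWithinAt f (f' x) (Set.Icc a b) x)
    (hφa : φ a = 0)
    (hφ : ∀ x ∈ Set.Ioc a b, φ x = (f x - f a) / (x - a) - f' a)
    (hφ'b : HasDerivWithinAt φ φ'b (Set.Icc a b) b)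
    (hT1 : φ'b * φ b < 0) :
    ∃ ξ ∈ Set.Ioo a b, f' ξ = (f ξ - f a) / (ξ - a) := by
  have hφ_slope : EqOn φ (fun x => slope f a x - f' a) (Ioc a b) := fun x hx => by
    simp only [hφ x hx, slope_def_field]
  have hφc : ContinuousOn φ (Icc a b) := continuousOn_Icc_of_eqOn_slope_sub
    (fun x hx => (hf x hx).continuousWithinAt) (hf a (left_mem_Icc.2 hab.le)) hφa hφ_slope
  obtain ⟨ξ, hξ, hextr⟩ :=
    exists_isLocalExtr_mem_Ioo_of_hasDerivWithinAt_mul_neg hab hφc hφ'b (by rwa [hφa, sub_zero])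
  have hfξ : HasDerivAt f (f' ξ) ξ :=
    (hf ξ (Ioo_subset_Icc_self hξ)).hasDerivAt (Icc_mem_nhds hξ.1 hξ.2)
  have hφξ : HasDerivAt φ ((f' ξ - slope f a ξ) / (ξ - a)) ξ :=
    ((hfξ.slope hξ.1.ne').sub_const (f' a)).congr_of_eventuallyEq <|
      eventually_of_mem (Ioo_mem_nhds hξ.1 hξ.2) fun y hy => hφ_slope (Ioo_subset_Ioc_self hy)
  have hflett := (div_eq_zero_iff.1 (hextr.hasDerivAt_eq_zero hφξ)).resolve_right
    (sub_ne_zero.2 hξ.1.ne')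
  exact ⟨ξ, hξ, by rw [sub_eq_zero.1 hflett, slope_def_field]⟩
end

section
/- Riedel–Sahoo theorem: Let a < b and let f : ℝ → ℝ be differentiable at every point of the closed interval [a, b]. Then there exists ξ ∈ (a, b) such that f(ξ) - f(a) = (ξ - a) * f'(ξ) - (1/2) * ((f'(b) - f'(a))/(b - a)) * (ξ - a)^2. -/
/-!
Subtracting `K / 2 * (x - a) ^ 2` with `K = (f' b - f' a) / (b - a)` turns `f` into a function
with equal derivatives at `a` and `b`, so the theorem is Flett's mean value theorem for it.

For Flett's theorem, let `F` be the slope of `g` from `a`, extended by `g' a` at `a`. On `(a, b]`,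
`F' x = (g' x - F x) / (x - a)`, and a zero of `F'` is exactly a Flett point. Since
`g' b = g' a = F a`, the derivative `F' b` is the negative of the mean slope of `F` on `[a, b]`,
which `F'` attains at some `c ∈ (a, b)` by the mean value theorem; by Darboux's theorem `F'`
then vanishes between `c` and `b`.
-/

open Set Function

section Slope

variable {𝕜 E : Type*} [NontriviallyNormedField 𝕜] [NormedAddCommGroup E] [NormedSpace 𝕜 E]
  {g : 𝕜 → E} {g' : E} {s : Set 𝕜} {a x : 𝕜}

theorem HasDerivWithinAt.slope (hg : HasDerivWithinAt g g' s x) (hx : x ≠ a) :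
    HasDerivWithinAt (_root_.slope g a) ((x - a)⁻¹ • (g' - _root_.slope g a x)) s x := by
  have hxa : x - a ≠ 0 := sub_ne_zero.2 hx
  have hinv := ((hasDerivWithinAt_id x s).sub_const a).inv hxa
  convert hinv.smul (hg.sub_const (g a)) using 1
  · ext y
    simp [slope_def_module]
  · simp only [id]
    rw [slope_def_module, smul_sub, smul_smul, sub_eq_add_neg, ← neg_smul]
    congr 2
    field_simp

theorem HasDerivWithinAt.update_slope_s12 [DecidableEq 𝕜] (hg : HasDerivWithinAt g g' s x)
    (hx : x ≠ a) (c : E) :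
    HasDerivWithinAt (update (_root_.slope g a) a c) ((x - a)⁻¹ • (g' - _root_.slope g a x)) s x :=
  (hg.slope hx).congr_of_eventuallyEq
    (eventually_nhdsWithin_of_eventually_nhds ((eventually_ne_nhds hx).mono fun _ hy =>
      update_of_ne hy _ _)) (update_of_ne hx _ _)

theorem HasDerivWithinAt.continuousWithinAt_update_slope_s12 [DecidableEq 𝕜]
    (hg : HasDerivWithinAt g g' s a) : ContinuousWithinAt (update (_root_.slope g a) a g') s a :=
  continuousWithinAt_update_same.2 (hasDerivWithinAt_iff_tendsto_slope.1 hg)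

end Slope

theorem flett_mean_value_s12 {g g' : ℝ → ℝ} {a b : ℝ} (hab : a < b)
    (hg : ∀ x ∈ Icc a b, HasDerivWithinAt g (g' x) (Icc a b) x) (hg'ab : g' a = g' b) :
    ∃ ξ ∈ Ioo a b, g ξ - g a = (ξ - a) * g' ξ := by
  set F := update (slope g a) a (g' a)
  set F' := fun x => (x - a)⁻¹ * (g' x - F x)
  have hF_of_ne {x} (hx : x ≠ a) : F x = slope g a x := update_of_ne hx _ _
  have hF : ∀ x ∈ Ioc a b, HasDerivWithinAt F (F' x) (Icc a b) x := fun x hx =>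
    ((hg x (Ioc_subset_Icc_self hx)).update_slope_s12 hx.1.ne' _).congr_deriv
      (by simp only [F', hF_of_ne hx.1.ne', smul_eq_mul])
  have hF_cont : ContinuousOn F (Icc a b) := fun x hx => by
    rcases eq_or_ne x a with rfl | hxa
    · exact (hg x hx).continuousWithinAt_update_slope_s12
    · exact (hF x ⟨hx.1.lt_of_ne' hxa, hx.2⟩).continuousWithinAt
  have flett_of_deriv_zero {x} (hx : x ∈ Ioc a b) (h : F' x = 0) : g x - g a = (x - a) * g' x := by
    have hxa : x - a ≠ 0 := sub_ne_zero.2 hx.1.ne'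
    simp only [F', hF_of_ne hx.1.ne', slope_def_field, mul_eq_zero, inv_eq_zero, hxa,
      false_or, sub_eq_zero] at h
    rw [h]
    field_simp
  obtain ⟨c, hc, hFc⟩ := exists_hasDerivAt_eq_slope F F' hab hF_cont fun x hx =>
    (hF x ⟨hx.1, hx.2.le⟩).hasDerivAt (Icc_mem_nhds hx.1 hx.2)
  have hFb : F' b = -F' c := by
    rw [hFc]
    simp only [F', F, update_self, update_of_ne hab.ne', hg'ab, slope_def_field]
    field_simp
    ring
  have hzero : (0 : ℝ) ∈ uIcc (F' c) (F' b) := by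
    rcases le_total 0 (F' c) with h | h <;> simp [hFb, h]
  obtain ⟨d, hd, hFd⟩ := (ordConnected_Ioc.image_hasDerivWithinAt fun x hx =>
    (hF x hx).mono Ioc_subset_Icc_self).uIcc_subset (mem_image_of_mem F' ⟨hc.1, hc.2.le⟩)
    (mem_image_of_mem F' ⟨hab, le_rfl⟩) hzero
  rcases hd.2.lt_or_eq with hdb | rfl
  · exact ⟨d, ⟨hd.1, hdb⟩, flett_of_deriv_zero hd hFd⟩
  · exact ⟨c, hc, flett_of_deriv_zero ⟨hc.1, hc.2.le⟩ (by linarith)⟩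

/-- Riedel–Sahoo theorem. -/
theorem riedel_sahoo (f f' : ℝ → ℝ) (a b : ℝ) (hab : a < b)
    (hf : ∀ x ∈ Set.Icc a b, HasDerivWithinAt f (f' x) (Set.Icc a b) x) :
    ∃ ξ ∈ Set.Ioo a b,
      f ξ - f a = (ξ - a) * f' ξ - (1 / 2) * ((f' b - f' a) / (b - a)) * (ξ - a) ^ 2 := by
  set K := (f' b - f' a) / (b - a)
  have hK : K * (b - a) = f' b - f' a := div_mul_cancel₀ _ (sub_ne_zero.2 hab.ne')
  have hg : ∀ x ∈ Icc a b, HasDerivWithinAt (fun y => f y - K / 2 * (y - a) ^ 2)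
      (f' x - K * (x - a)) (Icc a b) x := fun x hx =>
    ((hf x hx).sub ((((hasDerivWithinAt_id x _).sub_const a).pow 2).const_mul (K / 2)))
      |>.congr_deriv (by simp only [id]; ring)
  obtain ⟨ξ, hξ, hflett⟩ := flett_mean_value_s12 hab hg (by linarith)
  exact ⟨ξ, hξ, by linear_combination hflett⟩
end

section
/- Second-order Flett theorem: Let a < b and let f : ℝ → ℝ be twice differentiable at every point of the closed interval [a, b] (one-sided derivatives at the endpoints), with f''(a) = f''(b). Then there exists ξ ∈ (a, b) such that f(ξ) - f(a) = (ξ - a) * f'(ξ) - ((ξ - a)^2 / 2) * f''(ξ). -/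
/-!
Let `R x = (f x - f a - (x - a) f' x) / (x - a) ^ 2`, extended by its Taylor limit `-f'' a / 2`
at `a`. Then `R` is continuous on `[a, b]`, and on `(a, b]` its derivative is
`-(f'' x + 2 R x) / (x - a)`, whose zeros are exactly the points `ξ` of the conclusion.
Since `f'' b = f'' a = -2 R a`, the derivative at `b` is `2 (R a - R b) / (b - a)`: if
`R a ≠ R b`, the graph of `R` turns back towards the level `R a` near `b`, so an extremum of `R`
on `[a, b]` is interior, and Fermat's theorem applies; if `R a = R b`, Rolle's theorem does.
-/

open Set Filter Topology Asymptotics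

section ExtremalEndpoint

variable {H H' : ℝ → ℝ} {a b : ℝ}

theorem IsMaxOn.hasDerivWithinAt_Icc_right_nonneg {D : ℝ} (hab : a < b)
    (hmax : IsMaxOn H (Icc a b) b) (hD : HasDerivWithinAt H D (Icc a b) b) : 0 ≤ D := by
  have hcone : a - b ∈ posTangentConeAt (Icc a b) b :=
    sub_mem_posTangentConeAt_of_segment_subset (by rw [segment_symm, segment_eq_Icc hab.le])
  have h := hmax.localize.hasFDerivWithinAt_nonpos hD hcone
  rw [ContinuousLinearMap.toSpanSingleton_apply, smul_eq_mul] at h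
  exact nonneg_of_mul_nonpos_right h (sub_neg.2 hab)

theorem exists_hasDerivAt_eq_zero_of_le_of_hasDerivWithinAt_right_neg (hab : a < b)
    (hc : ContinuousOn H (Icc a b)) (hd : ∀ x ∈ Ioo a b, HasDerivAt H (H' x) x)
    (hb : HasDerivWithinAt H (H' b) (Icc a b) b) (hle : H a ≤ H b) (hneg : H' b < 0) :
    ∃ ξ ∈ Ioo a b, H' ξ = 0 := by
  have hb_not_max : ¬IsMaxOn H (Icc a b) b := fun h =>
    hneg.not_ge (h.hasDerivWithinAt_Icc_right_nonneg hab hb)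
  obtain ⟨c, hc_mem, hc_max⟩ := isCompact_Icc.exists_isMaxOn (nonempty_Icc.2 hab.le) hc
  have hca : c ≠ a := by
    rintro rfl
    exact hb_not_max fun x hx => (hc_max hx).trans hle
  have hcb : c ≠ b := by
    rintro rfl
    exact hb_not_max hc_max
  have hc_Ioo : c ∈ Ioo a b := ⟨hc_mem.1.lt_of_ne' hca, hc_mem.2.lt_of_ne hcb⟩
  exact ⟨c, hc_Ioo,
    (hc_max.isLocalMax (Icc_mem_nhds hc_Ioo.1 hc_Ioo.2)).hasDerivAt_eq_zero (hd c hc_Ioo)⟩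

theorem exists_hasDerivAt_eq_zero_of_sign_hasDerivWithinAt_right (hab : a < b)
    (hc : ContinuousOn H (Icc a b)) (hd : ∀ x ∈ Ioo a b, HasDerivAt H (H' x) x)
    (hb : HasDerivWithinAt H (H' b) (Icc a b) b)
    (hsign : SignType.sign (H' b) = SignType.sign (H a - H b)) :
    ∃ ξ ∈ Ioo a b, H' ξ = 0 := by
  rcases lt_trichotomy (H a) (H b) with hlt | heq | hgt
  · have hneg : H' b < 0 := sign_eq_neg_one_iff.1 (hsign.trans (sign_neg (sub_neg.2 hlt)))
    exact exists_hasDerivAt_eq_zero_of_le_of_hasDerivWithinAt_right_neg hab hc hd hb hlt.le hneg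
  · exact exists_hasDerivAt_eq_zero hab hc heq hd
  · have hpos : 0 < H' b := sign_eq_one_iff.1 (hsign.trans (sign_pos (sub_pos.2 hgt)))
    obtain ⟨ξ, hξ, hzero⟩ := exists_hasDerivAt_eq_zero_of_le_of_hasDerivWithinAt_right_neg
      (H := -H) (H' := -H') hab hc.neg (fun x hx => (hd x hx).neg) hb.neg
      (neg_le_neg hgt.le) (neg_neg_of_pos hpos)
    exact ⟨ξ, hξ, neg_eq_zero.1 hzero⟩

end ExtremalEndpoint

section FlettRatio

variable {f f' f'' : ℝ → ℝ} {a x : ℝ} {s : Set ℝ}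

def flettNumerator (f f' : ℝ → ℝ) (a x : ℝ) : ℝ :=
  f x - f a - (x - a) * f' x

/-- The value at `a` is the limit given by the second-order Taylor expansion of `f` at `a`. -/
noncomputable def flettRatio (f f' f'' : ℝ → ℝ) (a : ℝ) : ℝ → ℝ :=
  Function.update (fun x => flettNumerator f f' a x / (x - a) ^ 2) a (-f'' a / 2)

theorem flettRatio_self : flettRatio f f' f'' a a = -f'' a / 2 :=
  Function.update_self ..

theorem flettRatio_of_ne (hx : x ≠ a) :
    flettRatio f f' f'' a x = flettNumerator f f' a x / (x - a) ^ 2 :=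
  Function.update_of_ne hx ..

theorem hasDerivWithinAt_flettNumerator (hf : HasDerivWithinAt f (f' x) s x)
    (hf' : HasDerivWithinAt f' (f'' x) s x) :
    HasDerivWithinAt (flettNumerator f f' a) (-(x - a) * f'' x) s x := by
  have h := (hf.sub_const (f a)).sub (((hasDerivWithinAt_id x s).sub_const a).mul hf')
  exact h.congr_deriv (by simp only [id]; ring)

theorem Convex.isLittleO_flettNumerator_add (hs : Convex ℝ s) (ha : a ∈ s)
    (hf : ∀ x ∈ s, HasDerivWithinAt f (f' x) s x) (hf' : HasDerivWithinAt f' (f'' a) s a) :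
    (fun x => flettNumerator f f' a x + (x - a) ^ 2 / 2 * f'' a) =o[𝓝[s] a]
      fun x => (x - a) ^ 2 := by
  -- The left side is `(P x - P a) - (x - a) * Q x` with `P' = Q = o(x - a)`.
  set P : ℝ → ℝ := fun x => f x - (x - a) * f' a - (x - a) ^ 2 / 2 * f'' a
  set Q : ℝ → ℝ := fun x => f' x - f' a - (x - a) * f'' a
  have hQ : Q =o[𝓝[s] a] fun x => x - a := by
    simpa [Q, mul_comm] using hasDerivWithinAt_iff_isLittleO.1 hf'
  have hP : (fun x => P x - P a) =o[𝓝[s] a] fun x => (x - a) ^ (1 + 1) := by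
    refine hs.isLittleO_pow_succ_real ha (fun x hx => ?_) (by simpa using hQ)
    have h := (((hf x hx).sub (((hasDerivWithinAt_id x s).sub_const a).mul_const (f' a))).sub
      ((((hasDerivWithinAt_id x s).sub_const a).pow 2).div_const 2 |>.mul_const (f'' a)))
    exact h.congr_deriv (by simp only [id, Q]; ring)
  have hxQ : (fun x => (x - a) * Q x) =o[𝓝[s] a] fun x => (x - a) * (x - a) :=
    (isBigO_refl _ _).mul_isLittleO hQ
  refine (hP.sub (hxQ.congr_right fun x => by ring)).congr (fun x => ?_) (fun x => ?_)
  · simp only [flettNumerator, P, Q]; ring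
  · ring

theorem Convex.continuousWithinAt_flettRatio (hs : Convex ℝ s) (ha : a ∈ s)
    (hf : ∀ x ∈ s, HasDerivWithinAt f (f' x) s x) (hf' : HasDerivWithinAt f' (f'' a) s a) :
    ContinuousWithinAt (flettRatio f f' f'' a) s a := by
  refine continuousWithinAt_update_same.2 ?_
  have h := ((hs.isLittleO_flettNumerator_add ha hf hf').tendsto_div_nhds_zero.mono_left
    (nhdsWithin_mono _ (sdiff_subset (t := {a})))).sub_const (f'' a / 2)
  rw [zero_sub, ← neg_div] at h
  refine h.congr' ?_
  filter_upwards [self_mem_nhdsWithin] with x hx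
  have hxa : x - a ≠ 0 := sub_ne_zero.2 hx.2
  field_simp
  ring

theorem hasDerivWithinAt_flettRatio (hx : x ≠ a) (hf : HasDerivWithinAt f (f' x) s x)
    (hf' : HasDerivWithinAt f' (f'' x) s x) :
    HasDerivWithinAt (flettRatio f f' f'' a) (-(f'' x + 2 * flettRatio f f' f'' a x) / (x - a))
      s x := by
  have hxa : x - a ≠ 0 := sub_ne_zero.2 hx
  have h := (hasDerivWithinAt_flettNumerator (a := a) hf hf').div
    (((hasDerivWithinAt_id x s).sub_const a).pow 2) (pow_ne_zero 2 hxa)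
  refine (h.congr_deriv ?_).congr_of_eventuallyEq ?_ (flettRatio_of_ne hx)
  · rw [flettRatio_of_ne hx]
    simp only [id, Pi.pow_apply]
    field_simp
    ring
  · filter_upwards [nhdsWithin_le_nhds (isOpen_ne.mem_nhds hx)] with y hy
    exact flettRatio_of_ne hy

end FlettRatio

/-- Second-order Flett theorem. -/
theorem second_order_flett (f f' f'' : ℝ → ℝ) (a b : ℝ) (hab : a < b)
    (hf : ∀ x ∈ Set.Icc a b, HasDerivWithinAt f (f' x) (Set.Icc a b) x)
    (hf' : ∀ x ∈ Set.Icc a b, HasDerivWithinAt f' (f'' x) (Set.Icc a b) x)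
    (hend : f'' a = f'' b) :
    ∃ ξ ∈ Set.Ioo a b, f ξ - f a = (ξ - a) * f' ξ - ((ξ - a) ^ 2 / 2) * f'' ξ := by
  set R := flettRatio f f' f'' a
  have hR : ∀ x ∈ Ioc a b, HasDerivWithinAt R (-(f'' x + 2 * R x) / (x - a)) (Icc a b) x :=
    fun x hx => hasDerivWithinAt_flettRatio hx.1.ne' (hf x (Ioc_subset_Icc_self hx))
      (hf' x (Ioc_subset_Icc_self hx))
  have hRc : ContinuousOn R (Icc a b) := by
    intro x hx
    rcases hx.1.eq_or_lt with rfl | hax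
    · exact (convex_Icc a b).continuousWithinAt_flettRatio hx hf (hf' a hx)
    · exact (hR x ⟨hax, hx.2⟩).continuousWithinAt
  have hsign : SignType.sign (-(f'' b + 2 * R b) / (b - a)) = SignType.sign (R a - R b) := by
    have hRb : -(f'' b + 2 * R b) / (b - a) = (R a - R b) * (2 / (b - a)) := by
      rw [show R a = -f'' a / 2 from flettRatio_self, ← hend]
      ring
    rw [hRb, sign_mul, sign_pos (div_pos two_pos (sub_pos.2 hab)), mul_one]
  obtain ⟨ξ, hξ, hzero⟩ := exists_hasDerivAt_eq_zero_of_sign_hasDerivWithinAt_right hab hRc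
    (fun x hx => (hR x (Ioo_subset_Ioc_self hx)).hasDerivAt (Icc_mem_nhds hx.1 hx.2))
    (hR b (right_mem_Ioc.2 hab)) hsign
  have hξa : ξ - a ≠ 0 := sub_ne_zero.2 hξ.1.ne'
  have hRξ : R ξ = flettNumerator f f' a ξ / (ξ - a) ^ 2 := flettRatio_of_ne hξ.1.ne'
  rw [div_eq_zero_iff, or_iff_left hξa, hRξ, flettNumerator] at hzero
  field_simp at hzero
  exact ⟨ξ, hξ, by linear_combination (-1 / 2 : ℝ) * hzero⟩
end

section
/- Pawlikowska's extension of Flett's theorem: Let a < b, let n ≥ 1, and let f : ℝ → ℝ be n times differentiable at every point of the closed interval [a, b] (one-sided derivatives at the endpoints), with f⁽ⁿ⁾(a) = f⁽ⁿ⁾(b). Then there exists ξ ∈ (a, b) such that f(ξ) - f(a) = ∑_{i=1}^{n} ((-1)^{i+1} / i!) * (ξ - a)^i * f⁽ⁱ⁾(ξ). -/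
/-!
Put `H x = ∑_{k<n} (a - x)^k / k! · f⁽ᵏ⁾(x) - f(a)`, the Taylor polynomial of `f` centred at `x`
evaluated at `a`, minus `f(a)`. Its derivative telescopes to `(a - x)^(n-1) / (n-1)! · f⁽ⁿ⁾(x)`,
and the claim says exactly that `H'(ξ) (ξ - a) = n H(ξ)`, i.e. that `ψ x = H x / (x - a)^n` has a
critical point. Splitting each `f⁽ᵏ⁾` into its Taylor polynomial at `a` (for which `H` is computed
exactly) and a remainder vanishing to order `n - k` at `a` (Peano's form of the remainder, which
needs no continuity of `f⁽ⁿ⁾`) gives `ψ x → -(-1)^n f⁽ⁿ⁾(a) / n!` as `x → a⁺`. With this value at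
`a`, the hypothesis `f⁽ⁿ⁾(a) = f⁽ⁿ⁾(b)` becomes `ψ'(b) = n / (b - a) · (ψ(a) - ψ(b))`, and Flett's
argument applies: unless `ψ(a) = ψ(b)` (Rolle), `ψ` has an interior extremum.
-/

open Set Filter Topology Asymptotics

/-- The Taylor polynomial with `n` terms (degree `n - 1`) of `F 0` at `x₀`, evaluated at `x`,
where `F k` stands for the `k`-th derivative. -/
noncomputable def taylorSum (F : ℕ → ℝ → ℝ) (n : ℕ) (x₀ x : ℝ) : ℝ :=
  ∑ k ∈ Finset.range n, (x - x₀) ^ k / k.factorial * F k x₀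

theorem taylorSum_succ_self (F : ℕ → ℝ → ℝ) (n : ℕ) (x₀ : ℝ) :
    taylorSum F (n + 1) x₀ x₀ = F 0 x₀ := by
  simp [taylorSum, Finset.sum_range_succ']

theorem taylorSum_sub (F G : ℕ → ℝ → ℝ) (n : ℕ) (x₀ x : ℝ) :
    taylorSum (F - G) n x₀ x = taylorSum F n x₀ x - taylorSum G n x₀ x := by
  simp only [taylorSum, Pi.sub_apply, mul_sub, Finset.sum_sub_distrib]

theorem hasDerivAt_taylorSum_succ (F : ℕ → ℝ → ℝ) (n : ℕ) (x₀ x : ℝ) :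
    HasDerivAt (taylorSum F (n + 1) x₀) (taylorSum (fun k => F (k + 1)) n x₀ x) x := by
  have hterm (k : ℕ) : HasDerivAt (fun y => (y - x₀) ^ k / k.factorial * F k x₀)
      (k * (x - x₀) ^ (k - 1) * 1 / k.factorial * F k x₀) x :=
    (((hasDerivAt_id x).sub_const x₀).pow k).div_const _ |>.mul_const _
  refine (HasDerivAt.fun_sum fun k _ => hterm k).congr_deriv ?_
  rw [Finset.sum_range_succ', taylorSum]
  simp only [Nat.cast_zero, zero_mul, zero_div, add_zero, Nat.cast_add, Nat.cast_one,
    add_tsub_cancel_right, mul_one, Nat.factorial_succ, Nat.cast_mul]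
  refine Finset.sum_congr rfl fun k _ => ?_
  field_simp

theorem hasDerivWithinAt_taylorSum_center {F : ℕ → ℝ → ℝ} {n : ℕ} {s : Set ℝ} {x y : ℝ}
    (hF : ∀ i ≤ n, HasDerivWithinAt (F i) (F (i + 1) y) s y) :
    HasDerivWithinAt (fun z => taylorSum F (n + 1) z x) ((x - y) ^ n / n.factorial * F (n + 1) y)
      s y := by
  induction n with
  | zero => simpa [taylorSum] using hF 0 le_rfl
  | succ n ih =>
    have hpow : HasDerivWithinAt (fun z => (x - z) ^ (n + 1) / (n + 1).factorial)
        ((n + 1 : ℕ) * (x - y) ^ n * (-1) / (n + 1).factorial) s y :=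
      (((hasDerivWithinAt_id y s).const_sub x).pow (n + 1)).div_const _
    have hsum := (ih fun i hi => hF i (by omega)).add (hpow.mul (hF (n + 1) le_rfl))
    simp only [taylorSum, Finset.sum_range_succ _ (n + 1)] at hsum ⊢
    refine hsum.congr_deriv ?_
    rw [Nat.factorial_succ]
    push_cast
    field_simp
    ring

/-- The `k`-th derivative of the polynomial `x ↦ ∑_{j ≤ n} c j (x - a)^j / j!`. -/
noncomputable def taylorPolyDeriv (c : ℕ → ℝ) (n : ℕ) (a : ℝ) (k : ℕ) : ℝ → ℝ :=
  taylorSum (fun j _ => c (k + j)) (n + 1 - k) a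

section taylorPolyDeriv

variable (c : ℕ → ℝ) (n : ℕ) (a : ℝ)

theorem hasDerivAt_taylorPolyDeriv (k : ℕ) (x : ℝ) :
    HasDerivAt (taylorPolyDeriv c n a k) (taylorPolyDeriv c n a (k + 1) x) x := by
  rcases Nat.lt_or_ge n k with hnk | hkn
  · rw [taylorPolyDeriv, taylorPolyDeriv, show n + 1 - k = 0 by omega,
      show n + 1 - (k + 1) = 0 by omega]
    have hzero (G : ℕ → ℝ → ℝ) : taylorSum G 0 a = fun _ => 0 :=
      funext fun _ => Finset.sum_range_zero _
    rw [hzero, hzero]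
    exact hasDerivAt_const x (0 : ℝ)
  · unfold taylorPolyDeriv
    rw [show n + 1 - k = n - k + 1 by omega, show n + 1 - (k + 1) = n - k by omega]
    simpa only [add_assoc, add_comm 1] using hasDerivAt_taylorSum_succ _ (n - k) a x

theorem taylorPolyDeriv_self {k : ℕ} (hk : k ≤ n) : taylorPolyDeriv c n a k a = c k := by
  rw [taylorPolyDeriv, show n + 1 - k = n - k + 1 by omega, taylorSum_succ_self, add_zero]

theorem taylorPolyDeriv_top (x : ℝ) : taylorPolyDeriv c n a n x = c n := by
  simp [taylorPolyDeriv, taylorSum]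

theorem taylorSum_taylorPolyDeriv (x : ℝ) :
    taylorSum (taylorPolyDeriv c n a) (n + 1) x a = c 0 := by
  have hderiv (y : ℝ) :
      HasDerivAt (fun z => taylorSum (taylorPolyDeriv c n a) (n + 1) z a) 0 y := by
    have h := hasDerivWithinAt_taylorSum_center (n := n) (s := univ) (x := a) (y := y)
      fun i _ => (hasDerivAt_taylorPolyDeriv c n a i y).hasDerivWithinAt
    simpa [taylorPolyDeriv, taylorSum] using h.hasDerivAt univ_mem
  rw [is_const_of_deriv_eq_zero (fun y => (hderiv y).differentiableAt) (fun y => (hderiv y).deriv)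
    x a, taylorSum_succ_self, taylorPolyDeriv_self c n a (Nat.zero_le n)]

end taylorPolyDeriv

theorem isLittleO_pow_of_hasDerivWithinAt_chain {G : ℕ → ℝ → ℝ} {s : Set ℝ} {a : ℝ}
    (hs : Convex ℝ s) (ha : a ∈ s) (m : ℕ)
    (hG : ∀ i ≤ m, ∀ x ∈ s, HasDerivWithinAt (G i) (G (i + 1) x) s x)
    (hGa : ∀ i ≤ m + 1, G i a = 0) :
    G 0 =o[𝓝[s] a] fun x => (x - a) ^ (m + 1) := by
  induction m generalizing G with
  | zero =>
    have h := hasDerivWithinAt_iff_isLittleO.mp (hG 0 le_rfl a ha)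
    simpa [hGa 0 (by omega), hGa 1 le_rfl] using h
  | succ m ih =>
    have h1 := ih (G := fun i => G (i + 1)) (fun i hi => hG (i + 1) (by omega))
      (fun i hi => hGa (i + 1) (by omega))
    simpa [hGa 0 (by omega)] using hs.isLittleO_pow_succ_real ha (hG 0 (by omega)) h1

section TaylorPeano

variable {F : ℕ → ℝ → ℝ} {s : Set ℝ} {a : ℝ} {n : ℕ}

theorem isLittleO_taylorSum_center (hs : Convex ℝ s) (ha : a ∈ s)
    (hF : ∀ i < n, ∀ x ∈ s, HasDerivWithinAt (F i) (F (i + 1) x) s x) :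
    (fun x => taylorSum F n x a + (a - x) ^ n / n.factorial * F n a - F 0 a)
      =o[𝓝[s] a] fun x => (x - a) ^ n := by
  set P := taylorPolyDeriv (fun k => F k a) n a
  have hR (k : ℕ) (hk : k < n) : (F - P) k =o[𝓝[s] a] fun x => (x - a) ^ (n - k) := by
    have h := isLittleO_pow_of_hasDerivWithinAt_chain (G := fun i => (F - P) (k + i)) hs ha
      (n - 1 - k) (fun i hi x hx => (hF (k + i) (by omega) x hx).sub
        (hasDerivAt_taylorPolyDeriv _ n a (k + i) x).hasDerivWithinAt)
      (fun i hi => sub_eq_zero.mpr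
        (taylorPolyDeriv_self (fun k => F k a) n a (k := k + i) (by omega)).symm)
    rwa [show n - 1 - k + 1 = n - k by omega] at h
  have hsplit (x : ℝ) : taylorSum F n x a + (a - x) ^ n / n.factorial * F n a - F 0 a
      = taylorSum (F - P) n x a := by
    have hP := taylorSum_taylorPolyDeriv (fun k => F k a) n a x
    rw [taylorSum, Finset.sum_range_succ, taylorPolyDeriv_top, ← taylorSum] at hP
    rw [taylorSum_sub]
    linarith
  simp_rw [hsplit, taylorSum]
  refine IsLittleO.fun_sum fun k hk => ?_
  have hk := Finset.mem_range.mp hk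
  have hcoeff : (fun x => (a - x) ^ k / k.factorial) =O[𝓝[s] a] fun x => (x - a) ^ k :=
    isBigO_of_le _ fun x => by
      rw [norm_div, norm_pow, norm_pow, ← norm_neg (x - a), neg_sub]
      exact div_le_self (by positivity) (by exact_mod_cast Nat.factorial_pos k)
  refine (hcoeff.mul_isLittleO (hR k hk)).congr_right fun x => ?_
  rw [← pow_add, Nat.add_sub_cancel' hk.le]

theorem tendsto_taylorSum_center_sub_div_pow (hs : Convex ℝ s) (ha : a ∈ s)
    (hF : ∀ i < n, ∀ x ∈ s, HasDerivWithinAt (F i) (F (i + 1) x) s x) :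
    Tendsto (fun x => (taylorSum F n x a - F 0 a) / (x - a) ^ n) (𝓝[s \ {a}] a)
      (𝓝 (-((-1) ^ n * F n a / n.factorial))) := by
  have h := ((isLittleO_taylorSum_center hs ha hF).tendsto_div_nhds_zero.mono_left
    (nhdsWithin_mono a (sdiff_subset (t := {a})))).sub_const ((-1) ^ n * F n a / n.factorial)
  rw [zero_sub] at h
  refine h.congr' (eventually_nhdsWithin_of_forall fun x hx => ?_)
  have hxa : x - a ≠ 0 := sub_ne_zero.mpr hx.2
  rw [show a - x = -(x - a) by ring, neg_pow]
  field_simp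
  ring

end TaylorPeano

theorem exists_hasDerivAt_eq_zero_of_lt_of_hasDerivWithinAt_neg {f f' : ℝ → ℝ} {a b : ℝ}
    (hab : a < b) (hf : ContinuousOn f (Icc a b)) (hff' : ∀ x ∈ Ioo a b, HasDerivAt f (f' x) x)
    (hb : HasDerivWithinAt f (f' b) (Icc a b) b) (hfab : f a < f b) (hf'b : f' b < 0) :
    ∃ ξ ∈ Ioo a b, f' ξ = 0 := by
  obtain ⟨c, hc, hmax⟩ := isCompact_Icc.exists_isMaxOn (nonempty_Icc.2 hab.le) hf
  have hca : c ≠ a := by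
    rintro rfl
    exact (hmax (right_mem_Icc.2 hab.le)).not_gt hfab
  have hcb : c ≠ b := by
    rintro rfl
    have hcone : a - c ∈ posTangentConeAt (Icc a c) c :=
      sub_mem_posTangentConeAt_of_segment_subset (by rw [segment_symm, segment_eq_Icc hab.le])
    have h := hmax.localize.hasFDerivWithinAt_nonpos hb hcone
    rw [ContinuousLinearMap.toSpanSingleton_apply, smul_eq_mul] at h
    nlinarith
  have hcI : c ∈ Ioo a b := ⟨lt_of_le_of_ne hc.1 hca.symm, lt_of_le_of_ne hc.2 hcb⟩
  exact ⟨c, hcI, (hmax.isLocalMax (Icc_mem_nhds hcI.1 hcI.2)).hasDerivAt_eq_zero (hff' c hcI)⟩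

theorem exists_hasDerivAt_eq_zero_of_hasDerivWithinAt_eq_mul_sub {f f' : ℝ → ℝ} {a b c : ℝ}
    (hab : a < b) (hc : 0 < c) (hf : ContinuousOn f (Icc a b))
    (hff' : ∀ x ∈ Ioo a b, HasDerivAt f (f' x) x) (hb : HasDerivWithinAt f (f' b) (Icc a b) b)
    (hf'b : f' b = c * (f a - f b)) :
    ∃ ξ ∈ Ioo a b, f' ξ = 0 := by
  rcases lt_trichotomy (f a) (f b) with h | h | h
  · exact exists_hasDerivAt_eq_zero_of_lt_of_hasDerivWithinAt_neg hab hf hff' hb h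
      (hf'b ▸ mul_neg_of_pos_of_neg hc (sub_neg.mpr h))
  · exact exists_hasDerivAt_eq_zero hab hf h hff'
  · obtain ⟨ξ, hξ, h0⟩ := exists_hasDerivAt_eq_zero_of_lt_of_hasDerivWithinAt_neg (f' := -f')
      hab hf.neg (fun x hx => (hff' x hx).neg) hb.neg (neg_lt_neg h)
      (by simpa [hf'b] using mul_pos hc (sub_pos.mpr h))
    exact ⟨ξ, hξ, neg_eq_zero.mp h0⟩

theorem exists_mul_sub_eq_mul_of_tendsto_div_pow {H H' : ℝ → ℝ} {a b L : ℝ} {n : ℕ}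
    (hab : a < b) (hn : 0 < n) (hH : ∀ x ∈ Ioc a b, HasDerivWithinAt H (H' x) (Icc a b) x)
    (hlim : Tendsto (fun x => H x / (x - a) ^ n) (𝓝[>] a) (𝓝 L))
    (hb : H' b * (b - a) = n * L * (b - a) ^ n) :
    ∃ ξ ∈ Ioo a b, H' ξ * (ξ - a) = n * H ξ := by
  classical
  obtain ⟨m, rfl⟩ : ∃ m, n = m + 1 := ⟨n - 1, by omega⟩
  set ψ := Function.update (fun x => H x / (x - a) ^ (m + 1)) a L
  set D := fun x => (H' x * (x - a) - (m + 1 : ℕ) * H x) / (x - a) ^ (m + 2)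
  have hψ (x : ℝ) (hx : x ∈ Ioc a b) : HasDerivWithinAt ψ (D x) (Icc a b) x := by
    have hxa : x - a ≠ 0 := sub_ne_zero.mpr hx.1.ne'
    have hq := (hH x hx).div (((hasDerivWithinAt_id x _).sub_const a).fun_pow (m + 1))
      (pow_ne_zero _ hxa)
    refine (hq.congr_deriv ?_).congr_of_eventuallyEq ?_ (Function.update_of_ne hx.1.ne' _ _)
    · simp only [D, id, add_tsub_cancel_right, mul_one]
      field_simp
      generalize x - a = t
      ring
    · exact eventually_nhdsWithin_of_eventually_nhds
        ((eventually_ne_nhds hx.1.ne').mono fun y hy => Function.update_of_ne hy _ _)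
  have hcont : ContinuousOn ψ (Icc a b) := by
    intro x hx
    rcases eq_or_lt_of_le hx.1 with rfl | hax
    · rwa [continuousWithinAt_update_same, Icc_sdiff_left, nhdsWithin_Ioc_eq_nhdsGT hab]
    · exact (hψ x ⟨hax, hx.2⟩).continuousWithinAt
  have hDb : D b = (m + 1 : ℕ) / (b - a) * (ψ a - ψ b) := by
    have hba : b - a ≠ 0 := sub_ne_zero.mpr hab.ne'
    simp only [D, ψ, Function.update_self, Function.update_of_ne hab.ne', hb]
    field_simp
    ring
  obtain ⟨ξ, hξ, hDξ⟩ := exists_hasDerivAt_eq_zero_of_hasDerivWithinAt_eq_mul_sub hab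
    (by have := sub_pos.mpr hab; positivity) hcont
    (fun x hx => (hψ x (Ioo_subset_Ioc_self hx)).hasDerivAt (Icc_mem_nhds hx.1 hx.2))
    (hψ b ⟨hab, le_rfl⟩) hDb
  rw [div_eq_zero_iff, sub_eq_zero] at hDξ
  exact ⟨ξ, hξ, hDξ.resolve_right (pow_ne_zero _ (sub_ne_zero.mpr hξ.1.ne'))⟩

theorem taylorSum_succ_eq_sub_sum_Icc (F : ℕ → ℝ → ℝ) (n : ℕ) (x a : ℝ) :
    taylorSum F (n + 1) x a = F 0 x -
      ∑ i ∈ Finset.Icc 1 n, ((-1 : ℝ) ^ (i + 1) / i.factorial) * (x - a) ^ i * F i x := by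
  rw [taylorSum, Finset.sum_range_succ', ← Finset.Ico_add_one_right_eq_Icc,
    Finset.sum_Ico_eq_sum_range, add_tsub_cancel_right]
  have hterm : ∀ k ∈ Finset.range n, (a - x) ^ (k + 1) / (k + 1).factorial * F (k + 1) x
      = -((-1 : ℝ) ^ (1 + k + 1) / (1 + k).factorial * (x - a) ^ (1 + k) * F (1 + k) x) := by
    intro k _
    rw [show a - x = -(x - a) by ring, neg_pow, add_comm 1 k]
    ring
  rw [Finset.sum_congr rfl hterm, Finset.sum_neg_distrib]
  simp only [pow_zero, Nat.factorial_zero, Nat.cast_one, div_one, one_mul]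
  ring

/-- Pawlikowska's extension of Flett's theorem. Here `F i` denotes the `i`-th
derivative of `f = F 0` on `[a, b]` (one-sided derivatives at the endpoints). -/
theorem pawlikowska (F : ℕ → ℝ → ℝ) (a b : ℝ) (hab : a < b) (n : ℕ) (hn : 1 ≤ n)
    (hF : ∀ i < n, ∀ x ∈ Set.Icc a b, HasDerivWithinAt (F i) (F (i + 1) x) (Set.Icc a b) x)
    (hend : F n a = F n b) :
    ∃ ξ ∈ Set.Ioo a b,
      F 0 ξ - F 0 a =
        ∑ i ∈ Finset.Icc 1 n, ((-1 : ℝ) ^ (i + 1) / (Nat.factorial i)) * (ξ - a) ^ i * F i ξ := by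
  obtain ⟨m, rfl⟩ : ∃ m, n = m + 1 := ⟨n - 1, by omega⟩
  have hfac : ((m + 1).factorial : ℝ) = (m + 1) * m.factorial := by
    push_cast [Nat.factorial_succ]
    ring
  have hH (x : ℝ) (hx : x ∈ Icc a b) : HasDerivWithinAt (fun y => taylorSum F (m + 1) y a - F 0 a)
      ((a - x) ^ m / m.factorial * F (m + 1) x) (Icc a b) x :=
    (hasDerivWithinAt_taylorSum_center fun i hi => hF i (by omega) x hx).sub_const _
  have hlim := tendsto_taylorSum_center_sub_div_pow (convex_Icc a b) (left_mem_Icc.2 hab.le) hF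
  rw [Icc_sdiff_left, nhdsWithin_Ioc_eq_nhdsGT hab] at hlim
  obtain ⟨ξ, hξ, hξeq⟩ := exists_mul_sub_eq_mul_of_tendsto_div_pow hab hn
    (fun x hx => hH x (Ioc_subset_Icc_self hx)) hlim (by
      rw [← hend, show a - b = -(b - a) by ring, neg_pow, hfac]
      push_cast
      field_simp
      ring)
  refine ⟨ξ, hξ, ?_⟩
  have hξ' : taylorSum F (m + 2) ξ a = F 0 a := by
    rw [taylorSum, Finset.sum_range_succ, ← taylorSum, hfac]
    push_cast at hξeq
    rw [show a - ξ = -(ξ - a) by ring, neg_pow] at hξeq ⊢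
    field_simp at hξeq ⊢
    linear_combination -hξeq
  rw [taylorSum_succ_eq_sub_sum_Icc] at hξ'
  linarith
end

section
/- Flett-type mean value theorem for a weighted Volterra operator: Let a < b, let f : ℝ → ℝ be continuous on [a, b] with ∫_a^b f(x) dx = 0, and let g : ℝ → ℝ be continuously differentiable on [a, b] with g'(x) ≠ 0 for all x ∈ [a, b]. Then there exists ξ ∈ (a, b) such that ∫_a^ξ f(x) g(x) dx = g(a) * ∫_a^ξ f(x) dx. -/
/-!
Write `F t = ∫_a^t f`, `Φ t = ∫_a^t f (g - g a)`, `h = g - g a`; by Darboux `g'` has constant sign,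
say `g' > 0`, so `h > 0` on `(a, b]`. If `Φ` had no zero in `(a, b)` it would have constant sign,
say `Φ > 0` (otherwise replace `f` by `-f`). Then `k = F - Φ / h` has derivative `g' Φ / h² > 0` on
`(a, b)`, tends to `0` at `a⁺` because `|Φ t| ≤ h t ∫_a^t |f|`, and `k b = -Φ b / h b ≤ 0`,
which is impossible.
-/

open Set Filter Topology intervalIntegral

section

variable {f g g' h h' : ℝ → ℝ} {a b t : ℝ}

theorem hasDerivAt_integral_of_continuousOn_Icc (hf : ContinuousOn f (Icc a b))
    (ht : t ∈ Ioo a b) : HasDerivAt (fun u => ∫ x in a..u, f x) (f t) t :=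
  integral_hasDerivAt_right
    ((hf.mono (Icc_subset_Icc_right ht.2.le)).intervalIntegrable_of_Icc ht.1.le)
    ((hf.mono Ioo_subset_Icc_self).stronglyMeasurableAtFilter isOpen_Ioo t ht)
    (hf.continuousAt (Icc_mem_nhds ht.1 ht.2))

theorem continuousOn_integral_of_continuousOn_Icc (hab : a ≤ b) (hf : ContinuousOn f (Icc a b)) :
    ContinuousOn (fun u => ∫ x in a..u, f x) (Icc a b) := by
  rw [← uIcc_of_le hab] at hf ⊢
  exact continuousOn_primitive_interval hf.integrableOn_uIcc

theorem tendsto_integral_nhdsGT (hab : a < b) (hf : ContinuousOn f (Icc a b)) :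
    Tendsto (fun u => ∫ x in a..u, f x) (𝓝[>] a) (𝓝 0) := by
  have hcont := continuousOn_integral_of_continuousOn_Icc hab.le hf a (left_mem_Icc.2 hab.le)
  simpa using hcont.tendsto.mono_left
    (nhdsWithin_le_of_mem (mem_of_superset (Ioo_mem_nhdsGT hab) Ioo_subset_Icc_self))

theorem abs_integral_mul_le_of_monotoneOn (hat : a ≤ t) (hf : ContinuousOn f (Icc a t))
    (hh : ContinuousOn h (Icc a t)) (hmono : MonotoneOn h (Icc a t)) (hha : 0 ≤ h a) :
    |∫ x in a..t, f x * h x| ≤ h t * ∫ x in a..t, |f x| :=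
  calc |∫ x in a..t, f x * h x| ≤ ∫ x in a..t, |f x * h x| := abs_integral_le_integral_abs hat
    _ ≤ ∫ x in a..t, h t * |f x| := by
        refine integral_mono_on hat ((hf.mul hh).abs.intervalIntegrable_of_Icc hat)
          ((continuousOn_const.mul hf.abs).intervalIntegrable_of_Icc hat) fun x hx => ?_
        have hhx : 0 ≤ h x := hha.trans (hmono (left_mem_Icc.2 hat) hx hx.1)
        rw [abs_mul, abs_of_nonneg hhx, mul_comm]
        exact mul_le_mul_of_nonneg_right (hmono hx (right_mem_Icc.2 hat) hx.2) (abs_nonneg _)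
    _ = h t * ∫ x in a..t, |f x| := integral_const_mul _ _

theorem tendsto_integral_mul_div_nhdsGT (hab : a < b) (hf : ContinuousOn f (Icc a b))
    (hh : ContinuousOn h (Icc a b)) (hmono : MonotoneOn h (Icc a b)) (hha : h a = 0) :
    Tendsto (fun t => (∫ x in a..t, f x * h x) / h t) (𝓝[>] a) (𝓝 0) := by
  refine squeeze_zero_norm' ?_ (tendsto_integral_nhdsGT hab hf.abs)
  filter_upwards [Ioo_mem_nhdsGT hab] with t ht
  have hsub : Icc a t ⊆ Icc a b := Icc_subset_Icc_right ht.2.le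
  have hht : 0 ≤ h t := hha ▸ hmono (left_mem_Icc.2 hab.le) ⟨ht.1.le, ht.2.le⟩ ht.1.le
  rw [Real.norm_eq_abs, abs_div, abs_of_nonneg hht]
  refine div_le_of_le_mul₀ hht (integral_nonneg ht.1.le fun _ _ => abs_nonneg _) ?_
  rw [mul_comm]
  exact abs_integral_mul_le_of_monotoneOn ht.1.le (hf.mono hsub) (hh.mono hsub) (hmono.mono hsub)
    hha.ge

theorem strictMonoOn_integral_sub_integral_mul_div (hab : a < b) (hf : ContinuousOn f (Icc a b))
    (hh : ContinuousOn h (Icc a b)) (hpos : ∀ t ∈ Ioc a b, 0 < h t)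
    (hh' : ∀ t ∈ Ioo a b, HasDerivAt h (h' t) t) (hh'pos : ∀ t ∈ Ioo a b, 0 < h' t)
    (hΦ : ∀ t ∈ Ioo a b, 0 < ∫ x in a..t, f x * h x) :
    StrictMonoOn (fun t => (∫ x in a..t, f x) - (∫ x in a..t, f x * h x) / h t) (Ioc a b) := by
  have hfh : ContinuousOn (fun x => f x * h x) (Icc a b) := hf.mul hh
  refine strictMonoOn_of_hasDerivWithinAt_pos (convex_Ioc a b)
    (f' := fun t => h' t * (∫ x in a..t, f x * h x) / h t ^ 2) ?_ ?_ ?_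
  · exact ((continuousOn_integral_of_continuousOn_Icc hab.le hf).mono Ioc_subset_Icc_self).sub
      (((continuousOn_integral_of_continuousOn_Icc hab.le hfh).mono Ioc_subset_Icc_self).div
        (hh.mono Ioc_subset_Icc_self) fun t ht => (hpos t ht).ne')
  · rw [interior_Ioc]
    intro t ht
    have hne := (hpos t (Ioo_subset_Ioc_self ht)).ne'
    refine ((hasDerivAt_integral_of_continuousOn_Icc hf ht).sub
      ((hasDerivAt_integral_of_continuousOn_Icc hfh ht).div (hh' t ht) hne)).hasDerivWithinAt
      |>.congr_deriv ?_
    field_simp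
    ring
  · rw [interior_Ioc]
    intro t ht
    exact div_pos (mul_pos (hh'pos t ht) (hΦ t ht)) (pow_pos (hpos t (Ioo_subset_Ioc_self ht)) 2)

theorem not_forall_integral_mul_pos (hab : a < b) (hf : ContinuousOn f (Icc a b))
    (hfint : ∫ x in a..b, f x = 0) (hh : ContinuousOn h (Icc a b)) (hha : h a = 0)
    (hh' : ∀ t ∈ Ioo a b, HasDerivAt h (h' t) t) (hh'pos : ∀ t ∈ Ioo a b, 0 < h' t) :
    ¬ ∀ t ∈ Ioo a b, 0 < ∫ x in a..t, f x * h x := by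
  intro hΦ
  have hmono : StrictMonoOn h (Icc a b) :=
    strictMonoOn_of_hasDerivWithinAt_pos (convex_Icc a b) hh
      (by simpa only [interior_Icc] using fun t ht => (hh' t ht).hasDerivWithinAt)
      (by rwa [interior_Icc])
  have hpos : ∀ t ∈ Ioc a b, 0 < h t := fun t ht =>
    hha ▸ hmono (left_mem_Icc.2 hab.le) (Ioc_subset_Icc_self ht) ht.1
  set k := fun t => (∫ x in a..t, f x) - (∫ x in a..t, f x * h x) / h t
  have hk : StrictMonoOn k (Ioc a b) :=
    strictMonoOn_integral_sub_integral_mul_div hab hf hh hpos hh' hh'pos hΦ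
  have hk_lim : Tendsto k (𝓝[>] a) (𝓝 0) := by
    simpa using (tendsto_integral_nhdsGT hab hf).sub
      (tendsto_integral_mul_div_nhdsGT hab hf hh hmono.monotoneOn hha)
  have hΦb : 0 ≤ ∫ x in a..b, f x * h x := by
    have hcont := continuousOn_integral_of_continuousOn_Icc hab.le (hf.mul hh) b
      (right_mem_Icc.2 hab.le)
    refine ge_of_tendsto (hcont.tendsto.mono_left (nhdsWithin_le_of_mem (Icc_mem_nhdsLT hab))) ?_
    filter_upwards [Ioo_mem_nhdsLT hab] with t ht using (hΦ t ht).le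
  have hkb : k b ≤ 0 := by
    simp only [k, hfint, zero_sub, neg_nonpos]
    exact div_nonneg hΦb (hpos b (right_mem_Ioc.2 hab)).le
  obtain ⟨c, hc⟩ := nonempty_Ioo.2 hab
  have hkc : 0 ≤ k c := by
    refine le_of_tendsto hk_lim ?_
    filter_upwards [Ioo_mem_nhdsGT hc.1] with s hs
    exact (hk ⟨hs.1, hs.2.le.trans hc.2.le⟩ (Ioo_subset_Ioc_self hc) hs.2).le
  linarith [hk (Ioo_subset_Ioc_self hc) (right_mem_Ioc.2 hab) hc.2]

theorem exists_integral_mul_eq_zero (hab : a < b) (hf : ContinuousOn f (Icc a b))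
    (hfint : ∫ x in a..b, f x = 0) (hh : ContinuousOn h (Icc a b)) (hha : h a = 0)
    (hh' : ∀ t ∈ Ioo a b, HasDerivAt h (h' t) t) (hh'pos : ∀ t ∈ Ioo a b, 0 < h' t) :
    ∃ ξ ∈ Ioo a b, ∫ x in a..ξ, f x * h x = 0 := by
  obtain ⟨t₁, ht₁, hΦt₁⟩ : ∃ t ∈ Ioo a b, ∫ x in a..t, f x * h x ≤ 0 := by
    have := not_forall_integral_mul_pos hab hf hfint hh hha hh' hh'pos
    push Not at this
    exact this
  obtain ⟨t₂, ht₂, hΦt₂⟩ : ∃ t ∈ Ioo a b, 0 ≤ ∫ x in a..t, f x * h x := by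
    have := not_forall_integral_mul_pos (f := fun x => -f x) hab hf.neg
      (by simp [integral_neg, hfint]) hh hha hh' hh'pos
    push Not at this
    simpa only [neg_mul, integral_neg, neg_nonpos] using this
  exact isPreconnected_Ioo.intermediate_value ht₁ ht₂
    ((continuousOn_integral_of_continuousOn_Icc hab.le (hf.mul hh)).mono Ioo_subset_Icc_self)
    ⟨hΦt₁, hΦt₂⟩

theorem exists_integral_mul_sub_eq_zero (hab : a < b) (hf : ContinuousOn f (Icc a b))
    (hfint : ∫ x in a..b, f x = 0) (hg : ContinuousOn g (Icc a b))
    (hg' : ∀ t ∈ Ioo a b, HasDerivAt g (g' t) t)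
    (hsign : (∀ t ∈ Ioo a b, g' t < 0) ∨ ∀ t ∈ Ioo a b, 0 < g' t) :
    ∃ ξ ∈ Ioo a b, ∫ x in a..ξ, f x * (g x - g a) = 0 := by
  rcases hsign with hneg | hpos
  · simpa only [mul_neg, integral_neg, neg_eq_zero] using
      exists_integral_mul_eq_zero (h := fun x => -(g x - g a)) hab hf hfint
        (hg.sub continuousOn_const).neg (by simp) (fun t ht => ((hg' t ht).sub_const (g a)).neg)
        (fun t ht => neg_pos.2 (hneg t ht))
  · exact exists_integral_mul_eq_zero hab hf hfint (hg.sub continuousOn_const) (sub_self _)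
      (fun t ht => (hg' t ht).sub_const (g a)) hpos

end

theorem weighted_volterra_flett_general (f g g' : ℝ → ℝ) (a b : ℝ) (hab : a < b)
    (hfc : ContinuousOn f (Set.Icc a b))
    (hfint : (∫ x in a..b, f x) = 0)
    (hg : ∀ x ∈ Set.Icc a b, HasDerivWithinAt g (g' x) (Set.Icc a b) x)
    (hg' : ∀ x ∈ Set.Icc a b, g' x ≠ 0) :
    ∃ ξ ∈ Set.Ioo a b, (∫ x in a..ξ, f x * g x) = g a * ∫ x in a..ξ, f x := by
  have hgc : ContinuousOn g (Icc a b) := fun x hx => (hg x hx).continuousWithinAt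
  have hsign : (∀ t ∈ Ioo a b, g' t < 0) ∨ ∀ t ∈ Ioo a b, 0 < g' t := by
    rcases hasDerivWithinAt_forall_lt_or_forall_gt_of_forall_ne (convex_Icc a b) hg hg'
      with hneg | hpos
    · exact .inl fun t ht => hneg t (Ioo_subset_Icc_self ht)
    · exact .inr fun t ht => hpos t (Ioo_subset_Icc_self ht)
  obtain ⟨ξ, hξ, hzero⟩ := exists_integral_mul_sub_eq_zero hab hfc hfint hgc
    (fun t ht => (hg t (Ioo_subset_Icc_self ht)).hasDerivAt (Icc_mem_nhds ht.1 ht.2)) hsign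
  have hsub : uIcc a ξ ⊆ Icc a b := by
    rw [uIcc_of_le hξ.1.le]
    exact Icc_subset_Icc_right hξ.2.le
  have hint : IntervalIntegrable (fun x => f x * (g x - g a)) MeasureTheory.volume a ξ :=
    ((hfc.mul (hgc.sub continuousOn_const)).mono hsub).intervalIntegrable
  have hint' : IntervalIntegrable (fun x => g a * f x) MeasureTheory.volume a ξ :=
    ((continuousOn_const.mul hfc).mono hsub).intervalIntegrable
  refine ⟨ξ, hξ, ?_⟩
  rw [← integral_const_mul, ← zero_add (∫ x in a..ξ, g a * f x), ← hzero,
    ← integral_add hint hint']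
  congr 1 with x
  ring

/-- Flett-type mean value theorem for a weighted Volterra operator. -/
theorem weighted_volterra_flett (f g g' : ℝ → ℝ) (a b : ℝ) (hab : a < b)
    (hfc : ContinuousOn f (Set.Icc a b))
    (hfint : (∫ x in a..b, f x) = 0)
    (hg : ∀ x ∈ Set.Icc a b, HasDerivWithinAt g (g' x) (Set.Icc a b) x)
    (hg'c : ContinuousOn g' (Set.Icc a b))
    (hg' : ∀ x ∈ Set.Icc a b, g' x ≠ 0) :
    ∃ ξ ∈ Set.Ioo a b, (∫ x in a..ξ, f x * g x) = g a * ∫ x in a..ξ, f x :=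
  weighted_volterra_flett_general f g g' a b hab hfc hfint hg hg'
end

section
/- Lupu–Lupu mean value theorem for the integral operators T and S: Let f, g : ℝ → ℝ be continuous on [0, 1], and define (Tφ)(t) = φ(t) - ∫_0^t φ(x) dx and (Sψ)(t) = t·ψ(t) - ∫_0^t x·ψ(x) dx for continuous φ, ψ. Then: (i) there exists ξ₁ ∈ (0, 1) such that (∫_0^1 f(x) dx) * (Tg)(ξ₁) = (∫_0^1 g(x) dx) * (Tf)(ξ₁); (ii) there exists ξ₂ ∈ (0, 1) such that (Tf)(ξ₂) = (Sf)(ξ₂); (iii) there exists ξ₃ ∈ (0, 1) such that (∫_0^1 f(x) dx) * (Sg)(ξ₃) = (∫_0^1 g(x) dx) * (Sf)(ξ₃). -/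
open intervalIntegral

/-- The operator `T`: `(Tφ)(t) = φ(t) - ∫_0^t φ(x) dx`. -/
noncomputable def Toper (φ : ℝ → ℝ) (t : ℝ) : ℝ := φ t - ∫ x in (0 : ℝ)..t, φ x

/-- The operator `S`: `(Sφ)(t) = t·φ(t) - ∫_0^t x·φ(x) dx`. -/
noncomputable def Soper (φ : ℝ → ℝ) (t : ℝ) : ℝ := t * φ t - ∫ x in (0 : ℝ)..t, x * φ x

/-!
If `T h > 0` on `(0, b)` then `h > 0` there: `e⁻ˢ ∫₀ˢ h` has derivative `e⁻ˢ (T h)(s)`, so it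
increases strictly from `0`, and `h = T h + ∫₀ˢ h`. If the continuous function `T h` has no zero
in `(0, b)`, it has a constant sign, so this applies to `h` or to `-h`. That contradicts
`∫₀ᵇ h = 0`, and also `h b = 0`, because `(T h)(b) ≥ 0` gives `h b ≥ ∫₀ᵇ h > 0`. Since
`S h = T (x h)`, the same argument works for `S`. Parts (i) and (iii) apply this to
`(∫ f) g - (∫ g) f`, and part (ii) to `(1 - x) f`, for which `T ((1 - x) f) = T f - S f`.
-/

open Set
open MeasureTheory (volume)

theorem IsPreconnected.forall_pos_or_forall_neg {X : Type*} [TopologicalSpace X] {s : Set X}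
    (hs : IsPreconnected s) {F : X → ℝ} (hF : ContinuousOn F s) (hne : ∀ x ∈ s, F x ≠ 0) :
    (∀ x ∈ s, 0 < F x) ∨ ∀ x ∈ s, F x < 0 := by
  by_contra! ⟨⟨x, hx, hFx⟩, ⟨y, hy, hFy⟩⟩
  obtain ⟨z, hz, hFz⟩ := hs.intermediate_value hx hy hF ⟨hFx, hFy⟩
  exact hne z hz hFz

variable {h u v : ℝ → ℝ} {b t : ℝ}

theorem toper_neg (h : ℝ → ℝ) (t : ℝ) : Toper (fun x => -h x) t = -Toper h t := by
  simp only [Toper, integral_neg]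
  ring

theorem toper_const_mul (c : ℝ) (h : ℝ → ℝ) (t : ℝ) :
    Toper (fun x => c * h x) t = c * Toper h t := by
  simp only [Toper, integral_const_mul]
  ring

theorem toper_sub (hu : IntervalIntegrable u volume 0 t) (hv : IntervalIntegrable v volume 0 t) :
    Toper (fun x => u x - v x) t = Toper u t - Toper v t := by
  simp only [Toper, integral_sub hu hv]
  ring

theorem soper_neg (h : ℝ → ℝ) (t : ℝ) : Soper (fun x => -h x) t = -Soper h t := by
  simp only [Soper, mul_neg, integral_neg]
  ring

theorem soper_const_mul (c : ℝ) (h : ℝ → ℝ) (t : ℝ) :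
    Soper (fun x => c * h x) t = c * Soper h t := by
  simp only [Soper, mul_left_comm _ c, integral_const_mul]
  ring

theorem soper_sub (hu : IntervalIntegrable u volume 0 t) (hv : IntervalIntegrable v volume 0 t) :
    Soper (fun x => u x - v x) t = Soper u t - Soper v t := by
  simp only [Soper, mul_sub]
  rw [integral_sub (hu.continuousOn_mul (continuousOn_id' _))
    (hv.continuousOn_mul (continuousOn_id' _))]
  ring

theorem toper_one_sub_mul (hu : IntervalIntegrable u volume 0 t) :
    Toper (fun x => (1 - x) * u x) t = Toper u t - Soper u t := by
  simp only [sub_mul, one_mul]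
  exact toper_sub hu (hu.continuousOn_mul (continuousOn_id' _))

theorem ContinuousOn.intervalIntegrable_zero_of_mem_Icc (hc : ContinuousOn h (Icc 0 b))
    (ht : t ∈ Icc 0 b) :
    IntervalIntegrable h volume 0 t :=
  (hc.mono (Icc_subset_Icc_right ht.2)).intervalIntegrable_of_Icc ht.1

theorem hasDerivAt_primitive (hc : ContinuousOn h (Icc 0 b)) (ht : t ∈ Ioo 0 b) :
    HasDerivAt (fun s => ∫ x in (0 : ℝ)..s, h x) (h t) t :=
  integral_hasDerivAt_right (hc.intervalIntegrable_zero_of_mem_Icc (Ioo_subset_Icc_self ht))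
    ((hc.mono Ioo_subset_Icc_self).stronglyMeasurableAtFilter isOpen_Ioo t ht)
    (hc.continuousAt (Icc_mem_nhds ht.1 ht.2))

theorem continuousOn_primitive_of_continuousOn (hb : 0 ≤ b) (hc : ContinuousOn h (Icc 0 b)) :
    ContinuousOn (fun s => ∫ x in (0 : ℝ)..s, h x) (Icc 0 b) := by
  rw [← uIcc_of_le hb] at hc ⊢
  exact continuousOn_primitive_interval (hc.integrableOn_compact isCompact_uIcc)

theorem continuousOn_toper (hb : 0 ≤ b) (hc : ContinuousOn h (Icc 0 b)) :
    ContinuousOn (Toper h) (Icc 0 b) :=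
  hc.sub (continuousOn_primitive_of_continuousOn hb hc)

theorem continuousOn_soper (hb : 0 ≤ b) (hc : ContinuousOn h (Icc 0 b)) :
    ContinuousOn (Soper h) (Icc 0 b) :=
  continuousOn_toper hb ((continuousOn_id' _).mul hc)

theorem hasDerivAt_exp_neg_mul_primitive (hc : ContinuousOn h (Icc 0 b)) (ht : t ∈ Ioo 0 b) :
    HasDerivAt (fun s => Real.exp (-s) * ∫ x in (0 : ℝ)..s, h x)
      (Real.exp (-t) * Toper h t) t := by
  refine ((hasDerivAt_neg t).exp.mul (hasDerivAt_primitive hc ht)).congr_deriv ?_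
  simp only [Toper]
  ring

theorem primitive_pos_of_toper_pos (hc : ContinuousOn h (Icc 0 b))
    (hpos : ∀ t ∈ Ioo 0 b, 0 < Toper h t) (ht : t ∈ Ioo 0 b) :
    0 < ∫ x in (0 : ℝ)..t, h x := by
  have hb : 0 ≤ b := ht.1.le.trans ht.2.le
  have hmono : StrictMonoOn (fun s => Real.exp (-s) * ∫ x in (0 : ℝ)..s, h x) (Icc 0 b) := by
    refine strictMonoOn_of_hasDerivWithinAt_pos (convex_Icc 0 b)
      ((Real.continuous_exp.comp continuous_neg).continuousOn.mul
        (continuousOn_primitive_of_continuousOn hb hc))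
      (f' := fun s => Real.exp (-s) * Toper h s) (fun s hs => ?_) (fun s hs => ?_) <;>
      rw [interior_Icc] at hs
    · exact (hasDerivAt_exp_neg_mul_primitive hc hs).hasDerivWithinAt
    · exact mul_pos (Real.exp_pos _) (hpos s hs)
  have := hmono (left_mem_Icc.2 hb) (Ioo_subset_Icc_self ht) ht.1
  simp only [neg_zero, Real.exp_zero, integral_same, mul_zero] at this
  exact pos_of_mul_pos_right this (Real.exp_pos _).le

theorem pos_of_toper_pos (hc : ContinuousOn h (Icc 0 b))
    (hpos : ∀ t ∈ Ioo 0 b, 0 < Toper h t) (ht : t ∈ Ioo 0 b) : 0 < h t := by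
  have := hpos t ht
  have := primitive_pos_of_toper_pos hc hpos ht
  simp only [Toper] at *
  linarith

theorem integral_pos_of_toper_pos (hb : 0 < b) (hc : ContinuousOn h (Icc 0 b))
    (hpos : ∀ t ∈ Ioo 0 b, 0 < Toper h t) : 0 < ∫ x in (0 : ℝ)..b, h x :=
  intervalIntegral_pos_of_pos_on (hc.intervalIntegrable_of_Icc hb.le)
    (fun _ ht => pos_of_toper_pos hc hpos ht) hb

theorem right_pos_of_toper_pos (hb : 0 < b) (hc : ContinuousOn h (Icc 0 b))
    (hpos : ∀ t ∈ Ioo 0 b, 0 < Toper h t) : 0 < h b := by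
  have hTb : 0 ≤ Toper h b := by
    refine le_on_closure (fun t ht => (hpos t ht).le) continuousOn_const ?_ ?_ <;>
      rw [closure_Ioo hb.ne]
    · exact continuousOn_toper hb.le hc
    · exact right_mem_Icc.2 hb.le
  have := integral_pos_of_toper_pos hb hc hpos
  simp only [Toper] at hTb
  linarith

theorem integral_pos_of_soper_pos (hb : 0 < b) (hc : ContinuousOn h (Icc 0 b))
    (hpos : ∀ t ∈ Ioo 0 b, 0 < Soper h t) : 0 < ∫ x in (0 : ℝ)..b, h x :=
  intervalIntegral_pos_of_pos_on (hc.intervalIntegrable_of_Icc hb.le)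
    (fun _ ht => pos_of_mul_pos_right
      (pos_of_toper_pos (h := fun x => x * h x) ((continuousOn_id' _).mul hc) hpos ht) ht.1.le)
    hb

theorem exists_toper_eq_zero_of_integral_eq_zero (hb : 0 < b) (hc : ContinuousOn h (Icc 0 b))
    (hint : ∫ x in (0 : ℝ)..b, h x = 0) : ∃ ξ ∈ Ioo 0 b, Toper h ξ = 0 := by
  by_contra! hne
  rcases isPreconnected_Ioo.forall_pos_or_forall_neg
    ((continuousOn_toper hb.le hc).mono Ioo_subset_Icc_self) hne with hpos | hneg
  · exact (integral_pos_of_toper_pos hb hc hpos).ne' hint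
  · have := integral_pos_of_toper_pos (h := fun x => -h x) hb hc.neg fun t ht => by
      rw [toper_neg]
      exact neg_pos.2 (hneg t ht)
    simp [integral_neg, hint] at this

theorem exists_toper_eq_zero_of_right_eq_zero (hb : 0 < b) (hc : ContinuousOn h (Icc 0 b))
    (hhb : h b = 0) : ∃ ξ ∈ Ioo 0 b, Toper h ξ = 0 := by
  by_contra! hne
  rcases isPreconnected_Ioo.forall_pos_or_forall_neg
    ((continuousOn_toper hb.le hc).mono Ioo_subset_Icc_self) hne with hpos | hneg
  · exact (right_pos_of_toper_pos hb hc hpos).ne' hhb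
  · have := right_pos_of_toper_pos (h := fun x => -h x) hb hc.neg fun t ht => by
      rw [toper_neg]
      exact neg_pos.2 (hneg t ht)
    simp [hhb] at this

theorem exists_soper_eq_zero_of_integral_eq_zero (hb : 0 < b) (hc : ContinuousOn h (Icc 0 b))
    (hint : ∫ x in (0 : ℝ)..b, h x = 0) : ∃ ξ ∈ Ioo 0 b, Soper h ξ = 0 := by
  by_contra! hne
  rcases isPreconnected_Ioo.forall_pos_or_forall_neg
    ((continuousOn_soper hb.le hc).mono Ioo_subset_Icc_self) hne with hpos | hneg
  · exact (integral_pos_of_soper_pos hb hc hpos).ne' hint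
  · have := integral_pos_of_soper_pos (h := fun x => -h x) hb hc.neg fun t ht => by
      rw [soper_neg]
      exact neg_pos.2 (hneg t ht)
    simp [integral_neg, hint] at this

/-- Lupu–Lupu mean value theorem for the integral operators `T` and `S`. -/
theorem lupu_lupu (f g : ℝ → ℝ)
    (hf : ContinuousOn f (Set.Icc 0 1)) (hg : ContinuousOn g (Set.Icc 0 1)) :
    (∃ ξ₁ ∈ Set.Ioo (0 : ℝ) 1,
        (∫ x in (0 : ℝ)..1, f x) * Toper g ξ₁ = (∫ x in (0 : ℝ)..1, g x) * Toper f ξ₁) ∧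
    (∃ ξ₂ ∈ Set.Ioo (0 : ℝ) 1, Toper f ξ₂ = Soper f ξ₂) ∧
    (∃ ξ₃ ∈ Set.Ioo (0 : ℝ) 1,
        (∫ x in (0 : ℝ)..1, f x) * Soper g ξ₃ = (∫ x in (0 : ℝ)..1, g x) * Soper f ξ₃) := by
  set A := ∫ x in (0 : ℝ)..1, f x
  set B := ∫ x in (0 : ℝ)..1, g x
  have hf' {ξ : ℝ} (hξ : ξ ∈ Ioo 0 1) : IntervalIntegrable f volume 0 ξ :=
    hf.intervalIntegrable_zero_of_mem_Icc (Ioo_subset_Icc_self hξ)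
  have hg' {ξ : ℝ} (hξ : ξ ∈ Ioo 0 1) : IntervalIntegrable g volume 0 ξ :=
    hg.intervalIntegrable_zero_of_mem_Icc (Ioo_subset_Icc_self hξ)
  have hc : ContinuousOn (fun x => A * g x - B * f x) (Icc 0 1) :=
    (continuousOn_const.mul hg).sub (continuousOn_const.mul hf)
  have hint : ∫ x in (0 : ℝ)..1, (A * g x - B * f x) = 0 := by
    rw [integral_sub ((hg.intervalIntegrable_of_Icc zero_le_one).const_mul A)
      ((hf.intervalIntegrable_of_Icc zero_le_one).const_mul B), integral_const_mul,
      integral_const_mul, mul_comm]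
    exact sub_self _
  refine ⟨?_, ?_, ?_⟩
  · obtain ⟨ξ, hξ, hT⟩ := exists_toper_eq_zero_of_integral_eq_zero one_pos hc hint
    rw [toper_sub ((hg' hξ).const_mul A) ((hf' hξ).const_mul B), toper_const_mul,
      toper_const_mul] at hT
    exact ⟨ξ, hξ, by linarith⟩
  · obtain ⟨ξ, hξ, hT⟩ := exists_toper_eq_zero_of_right_eq_zero
      (h := fun x => (1 - x) * f x) one_pos
      ((continuousOn_const.sub (continuousOn_id' _)).mul hf) (by simp)
    rw [toper_one_sub_mul (hf' hξ)] at hT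
    exact ⟨ξ, hξ, by linarith⟩
  · obtain ⟨ξ, hξ, hS⟩ := exists_soper_eq_zero_of_integral_eq_zero one_pos hc hint
    rw [soper_sub ((hg' hξ).const_mul A) ((hf' hξ).const_mul B), soper_const_mul,
      soper_const_mul] at hS
    exact ⟨ξ, hξ, by linarith⟩
end
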